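/- arXiv:2005.11980 — 3 statements merged into one kernel-verified Lean document; each statement's English description precedes it below -/
import Mathlib

section
/- For every λ ∈ [0,2) there exists a constant C = C(λ) > 0 such that for all U ∈ ℓ¹(ℕ) ∩ ℓ²(ℕ) with E_λ(U) < ∞ one has ‖U‖₂² ≤ C · ‖U‖₁^{2(2−λ)/(3−λ)} · E_λ(U)^{1/(3−λ)}. -/
/-- Discrete weighted Dirichlet form `E_λ(U) = Σ_{k≥1} k^λ (U(k+1) − U(k))²`
(indices shifted so that `k+1` ranges over `{1,2,…}`). -/
noncomputable def discreteEnergy (lam : ℝ) (U : ℕ → ℝ) : ℝ :=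
  ∑' k : ℕ, ((k : ℝ) + 1) ^ lam * (U (k + 2) - U (k + 1)) ^ 2

open Finset in
lemma sum_pow_le_aux (mu : ℝ) (h0 : 0 ≤ mu) (h1 : mu < 1) (n : ℕ) :
    ∑ i ∈ Finset.range n, ((i : ℝ) + 1) ^ (-mu) ≤ (n : ℝ) ^ (1 - mu) / (1 - mu) := by
  have hq0 : 0 < 1 - mu := by linarith
  induction n with
  | zero => simp [Real.zero_rpow hq0.ne']
  | succ n ih =>
    rw [Finset.sum_range_succ]
    have hn1 : (0:ℝ) < (n:ℝ) + 1 := by positivity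
    -- Bernoulli: (n/(n+1))^(1-mu) ≤ 1 - (1-mu)/(n+1)
    have hb := rpow_one_add_le_one_add_mul_self
      (s := -1/((n:ℝ)+1)) (p := 1 - mu) (by
        rw [neg_div]
        have : 1/((n:ℝ)+1) ≤ 1 := by
          rw [div_le_one hn1]; linarith
        linarith) (by linarith) (by linarith)
    have h2 : ((n:ℝ)) ^ (1-mu) ≤ ((n:ℝ)+1) ^ (1-mu) - (1-mu) * ((n:ℝ)+1) ^ (-mu) := by
      have hrw : (1 : ℝ) + -1/((n:ℝ)+1) = (n:ℝ)/((n:ℝ)+1) := by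
        field_simp
        ring
      rw [hrw] at hb
      have := mul_le_mul_of_nonneg_right hb (le_of_lt (Real.rpow_pos_of_pos hn1 (1-mu)))
      rw [Real.div_rpow (by positivity) hn1.le] at this
      rw [div_mul_cancel₀] at this
      · have hsplit : ((n:ℝ)+1)^(1-mu) = ((n:ℝ)+1) * ((n:ℝ)+1)^(-mu) := by
          rw [sub_eq_add_neg, Real.rpow_add hn1, Real.rpow_one]
        calc ((n:ℝ)) ^ (1-mu) ≤ (1 + (1-mu) * (-1/((n:ℝ)+1))) * ((n:ℝ)+1)^(1-mu) := this
          _ = ((n:ℝ)+1) ^ (1-mu) - (1-mu) * ((n:ℝ)+1) ^ (-mu) := by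
              rw [hsplit]; field_simp; ring
      · exact (Real.rpow_pos_of_pos hn1 _).ne'
    have h3 : ((n:ℝ)+1) ^ (-mu) ≤ (((n:ℝ)+1) ^ (1-mu) - ((n:ℝ))^(1-mu)) / (1-mu) := by
      rw [le_div_iff₀ hq0]
      nlinarith [h2]
    push_cast
    have h5 : (n:ℝ)^(1-mu)/(1-mu) + (((n:ℝ)+1)^(1-mu) - (n:ℝ)^(1-mu))/(1-mu)
        = ((n:ℝ)+1)^(1-mu)/(1-mu) := by ring
    linarith [ih, h3]

lemma key_ineq (lam : ℝ) (hlam0 : 0 ≤ lam) (hlam2 : lam < 2) (u : ℕ → ℝ)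
    (ha : Summable fun k : ℕ => |u k|) (hb : Summable fun k : ℕ => u k ^ 2)
    (hE : Summable fun k : ℕ => ((k : ℝ) + 1) ^ lam * (u (k + 1) - u k) ^ 2)
    (M : ℕ) (hM : 1 ≤ M) :
    (∑' k, u k ^ 2) ≤ 2 * (∑' k, |u k|) ^ 2 / (M : ℝ) +
      (2 / (2 - lam)) ^ 2 * (M : ℝ) ^ ((2 : ℝ) - lam) *
        ∑' k : ℕ, ((k : ℝ) + 1) ^ lam * (u (k + 1) - u k) ^ 2 := by
  set d : ℕ → ℝ := fun k => u (k + 1) - u k with hd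
  set w : ℕ → ℝ := fun k => ((k : ℝ) + 1) ^ lam with hw
  set L : ℝ := ∑' k, |u k| with hL
  set E : ℝ := ∑' k, w k * d k ^ 2 with hE'
  set X2 : ℝ := ∑' k, u k ^ 2 with hX2
  have hMpos : (0 : ℝ) < (M : ℝ) := by exact_mod_cast hM
  have hL0 : 0 ≤ L := tsum_nonneg fun k => abs_nonneg _
  have hE0 : 0 ≤ E := tsum_nonneg fun k => by positivity
  have hX20 : 0 ≤ X2 := tsum_nonneg fun k => sq_nonneg _
  have hwpos : ∀ k, 0 < w k := fun k => Real.rpow_pos_of_pos (by positivity) _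
  have huL : ∀ k, |u k| ≤ L := fun k => Summable.le_tsum ha k fun j _ => abs_nonneg _
  -- the window sums of |d|
  set D : ℕ → ℝ := fun k => ∑ i ∈ Finset.range (M - 1), |d (k + i)| with hD
  have hD0 : ∀ k, 0 ≤ D k := fun k => Finset.sum_nonneg fun i _ => abs_nonneg _
  have hDle : ∀ k, D k ≤ (M - 1 : ℕ) * (2 * L) := by
    intro k
    have : ∀ i ∈ Finset.range (M - 1), |d (k + i)| ≤ 2 * L := by
      intro i _
      calc |d (k + i)| ≤ |u (k + i + 1)| + |u (k + i)| := abs_sub _ _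
        _ ≤ 2 * L := by have := huL (k + i + 1); have := huL (k + i); linarith
    calc D k ≤ ∑ _i ∈ Finset.range (M - 1), 2 * L := Finset.sum_le_sum this
      _ = (M - 1 : ℕ) * (2 * L) := by rw [Finset.sum_const, Finset.card_range]; ring
  -- telescoping
  have htel : ∀ k m : ℕ, u (k + m) - u k = ∑ i ∈ Finset.range m, d (k + i) := by
    intro k m
    induction m with
    | zero => simp
    | succ m ih =>
      rw [Finset.sum_range_succ, ← ih]
      show u (k + m + 1) - u k = u (k + m) - u k + (u (k + m + 1) - u (k + m))
      ring
  -- Step A : M * |u k| ≤ L + M * D k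
  have hA : ∀ k, (M : ℝ) * |u k| ≤ L + (M : ℝ) * D k := by
    intro k
    have h1 : ∀ m ∈ Finset.range M, |u k| ≤ |u (k + m)| + D k := by
      intro m hm
      have hm' : m ≤ M - 1 := by
        have := Finset.mem_range.1 hm; omega
      have h2 : |u (k + m) - u k| ≤ D k := by
        rw [htel k m]
        calc |∑ i ∈ Finset.range m, d (k + i)| ≤ ∑ i ∈ Finset.range m, |d (k + i)| :=
              Finset.abs_sum_le_sum_abs _ _
          _ ≤ D k := Finset.sum_le_sum_of_subset_of_nonneg
              (Finset.range_subset_range.2 hm') (fun i _ _ => abs_nonneg _)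
      calc |u k| = |u (k + m) - (u (k + m) - u k)| := by ring_nf
        _ ≤ |u (k + m)| + |u (k + m) - u k| := abs_sub _ _
        _ ≤ |u (k + m)| + D k := by linarith
    have h3 : ∑ m ∈ Finset.range M, |u (k + m)| ≤ L := by
      have : ∑ m ∈ Finset.range M, |u (k + m)| = ∑ j ∈ Finset.Ico k (k + M), |u j| := by
        rw [Finset.sum_Ico_eq_sum_range]
        simp
      rw [this]
      exact Summable.sum_le_tsum _ (fun j _ => abs_nonneg _) ha
    calc (M : ℝ) * |u k| = ∑ _m ∈ Finset.range M, |u k| := by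
          rw [Finset.sum_const, Finset.card_range]; ring
      _ ≤ ∑ m ∈ Finset.range M, (|u (k + m)| + D k) := Finset.sum_le_sum h1
      _ = ∑ m ∈ Finset.range M, |u (k + m)| + (M : ℝ) * D k := by
          rw [Finset.sum_add_distrib, Finset.sum_const, Finset.card_range]; ring
      _ ≤ L + (M : ℝ) * D k := by linarith
  -- pointwise |u k| ≤ L/M + D k
  have hA' : ∀ k, |u k| ≤ L / (M : ℝ) + D k := by
    intro k
    rw [← sub_nonneg]
    have h := hA k
    have h2 : L / (M : ℝ) + D k - |u k| = (L + (M:ℝ) * D k - (M:ℝ) * |u k|) / M := by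
      field_simp
    rw [h2]
    apply div_nonneg _ hMpos.le
    linarith
  -- Step B
  have hB : ∀ k, u k ^ 2 ≤ |u k| * (L / (M:ℝ)) + |u k| * D k := by
    intro k
    have h1 : u k ^ 2 = |u k| * |u k| := by rw [abs_mul_abs_self]; ring
    rw [h1, ← mul_add]
    exact mul_le_mul_of_nonneg_left (hA' k) (abs_nonneg _)
  have hs1 : Summable (fun k : ℕ => |u k| * (L / (M:ℝ))) := ha.mul_right _
  have hs2 : Summable (fun k : ℕ => |u k| * D k) :=
    Summable.of_nonneg_of_le (fun k => mul_nonneg (abs_nonneg _) (hD0 k))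
      (fun k => mul_le_mul_of_nonneg_left (hDle k) (abs_nonneg _)) (ha.mul_right _)
  have hXB : X2 ≤ L * (L / (M:ℝ)) + ∑' k, |u k| * D k := by
    calc X2 ≤ ∑' k, (|u k| * (L / (M:ℝ)) + |u k| * D k) := Summable.tsum_le_tsum hB hb (hs1.add hs2)
      _ = (∑' k, |u k| * (L / (M:ℝ))) + ∑' k, |u k| * D k := Summable.tsum_add hs1 hs2
      _ = L * (L / (M:ℝ)) + ∑' k, |u k| * D k := by rw [tsum_mul_right]
  -- Step C : exchange sums
  have hdle : ∀ j, |d j| ≤ 2 * L := by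
    intro j
    calc |d j| ≤ |u (j + 1)| + |u j| := abs_sub _ _
      _ ≤ 2 * L := by linarith [huL (j + 1), huL j]
  have hgs : ∀ i : ℕ, Summable (fun k : ℕ => |u k| * |d (k + i)|) := by
    intro i
    exact Summable.of_nonneg_of_le (fun k => by positivity)
      (fun k => mul_le_mul_of_nonneg_left (hdle (k + i)) (abs_nonneg _)) (ha.mul_right (2 * L))
  have hSC : ∑' k, |u k| * D k
      = ∑ i ∈ Finset.range (M - 1), ∑' k : ℕ, |u k| * |d (k + i)| := by
    have h1 : ∀ k : ℕ, |u k| * D k = ∑ i ∈ Finset.range (M - 1), |u k| * |d (k + i)| := by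
      intro k; exact Finset.mul_sum _ _ _
    rw [tsum_congr h1, Summable.tsum_finsetSum (fun i _ => hgs i)]
  -- Step D : AM-GM with weights
  have h2l : (0:ℝ) < 2 - lam := by linarith
  set c0 : ℝ := 2 / (2 - lam) with hc0def
  have hc0 : 0 < c0 := by positivity
  set rho : ℝ := c0 * (M : ℝ) ^ ((1:ℝ) - lam / 2) with hrhodef
  have hMr : 0 < (M : ℝ) ^ ((1:ℝ) - lam / 2) := Real.rpow_pos_of_pos hMpos _
  have hrho : 0 < rho := by positivity
  have hDpt : ∀ i k : ℕ,
      |u k| * |d (k + i)| ≤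
        (rho / 2 * ((i:ℝ)+1) ^ (-(lam/2))) * (w (k + i) * d (k + i) ^ 2)
          + (1 / (2 * rho) * ((i:ℝ)+1) ^ (-(lam/2))) * u k ^ 2 := by
    intro i k
    have hcpos : (0:ℝ) < ((k + i : ℕ) : ℝ) + 1 := by positivity
    set c : ℝ := ((k + i : ℕ) : ℝ) + 1 with hc
    have hipos : (0:ℝ) < (i:ℝ) + 1 := by positivity
    set eps : ℝ := rho * ((i:ℝ)+1) ^ (-(lam/2)) with heps
    have hepspos : 0 < eps := by
      have := Real.rpow_pos_of_pos hipos (-(lam/2)); positivity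
    set A : ℝ := c ^ (lam/2) * |d (k + i)| with hAdef
    set B : ℝ := c ^ (-(lam/2)) * |u k| with hBdef
    have hccan : c ^ (lam/2) * c ^ (-(lam/2)) = 1 := by
      rw [← Real.rpow_add hcpos]; norm_num
    have hAB : A * B = |u k| * |d (k + i)| := by
      calc A * B = (c ^ (lam/2) * c ^ (-(lam/2))) * (|d (k + i)| * |u k|) := by ring
        _ = |u k| * |d (k + i)| := by rw [hccan]; ring
    have hamgm : A * B ≤ eps / 2 * A ^ 2 + 1 / (2 * eps) * B ^ 2 := by
      rw [← sub_nonneg]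
      have key : eps / 2 * A ^ 2 + 1 / (2 * eps) * B ^ 2 - A * B
          = (eps * A - B) ^ 2 / (2 * eps) := by
        field_simp; ring
      rw [key]
      positivity
    have hA2eq : A ^ 2 = c ^ lam * d (k + i) ^ 2 := by
      have h1 : (c ^ (lam/2)) ^ (2:ℕ) = c ^ lam := by
        rw [← Real.rpow_natCast (c ^ (lam/2)) 2, ← Real.rpow_mul hcpos.le]; norm_num
      rw [hAdef, mul_pow, h1, sq_abs]
    have hB2eq : B ^ 2 = c ^ (-lam) * u k ^ 2 := by
      have h1 : (c ^ (-(lam/2))) ^ (2:ℕ) = c ^ (-lam) := by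
        rw [← Real.rpow_natCast (c ^ (-(lam/2))) 2, ← Real.rpow_mul hcpos.le]; norm_num
      rw [hBdef, mul_pow, h1, sq_abs]
    have hwc : w (k + i) = c ^ lam := rfl
    have hstep1 : |u k| * |d (k + i)| ≤
        (rho / 2 * ((i:ℝ)+1) ^ (-(lam/2))) * (c ^ lam * d (k + i) ^ 2)
          + 1 / (2 * eps) * (c ^ (-lam) * u k ^ 2) := by
      rw [← hAB, ← hA2eq, ← hB2eq]
      calc A * B ≤ eps / 2 * A ^ 2 + 1 / (2 * eps) * B ^ 2 := hamgm
        _ = (rho / 2 * ((i:ℝ)+1) ^ (-(lam/2))) * A ^ 2 + 1 / (2 * eps) * B ^ 2 := by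
            rw [heps]; ring
    have hmono : c ^ (-lam) ≤ ((i:ℝ)+1) ^ (-lam) := by
      apply Real.rpow_le_rpow_of_nonpos hipos _ (by linarith)
      rw [hc]; push_cast; linarith [Nat.cast_nonneg (α := ℝ) k]
    have hq2 : (((i:ℝ)+1) ^ (-(lam/2))) ^ (2:ℕ) = ((i:ℝ)+1) ^ (-lam) := by
      rw [← Real.rpow_natCast (((i:ℝ)+1) ^ (-(lam/2))) 2, ← Real.rpow_mul hipos.le]
      norm_num
    have hqpos : 0 < ((i:ℝ)+1) ^ (-(lam/2)) := Real.rpow_pos_of_pos hipos _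
    have hid : 1 / (2 * eps) * (((i:ℝ)+1) ^ (-(lam/2))) ^ (2:ℕ)
        = 1 / (2 * rho) * ((i:ℝ)+1) ^ (-(lam/2)) := by
      rw [heps]
      field_simp
    have hstep2 : 1 / (2 * eps) * (c ^ (-lam) * u k ^ 2)
        ≤ (1 / (2 * rho) * ((i:ℝ)+1) ^ (-(lam/2))) * u k ^ 2 := by
      rw [← hid]
      have h1 : c ^ (-lam) * u k ^ 2 ≤ ((i:ℝ)+1) ^ (-lam) * u k ^ 2 :=
        mul_le_mul_of_nonneg_right hmono (sq_nonneg _)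
      calc 1 / (2 * eps) * (c ^ (-lam) * u k ^ 2)
          ≤ 1 / (2 * eps) * (((i:ℝ)+1) ^ (-lam) * u k ^ 2) :=
            mul_le_mul_of_nonneg_left h1 (by positivity)
        _ = 1 / (2 * eps) * (((i:ℝ)+1) ^ (-(lam/2))) ^ (2:ℕ) * u k ^ 2 := by
            rw [hq2]; ring
    calc |u k| * |d (k + i)| ≤
        (rho / 2 * ((i:ℝ)+1) ^ (-(lam/2))) * (c ^ lam * d (k + i) ^ 2)
          + 1 / (2 * eps) * (c ^ (-lam) * u k ^ 2) := hstep1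
      _ ≤ (rho / 2 * ((i:ℝ)+1) ^ (-(lam/2))) * (w (k + i) * d (k + i) ^ 2)
          + (1 / (2 * rho) * ((i:ℝ)+1) ^ (-(lam/2))) * u k ^ 2 := by
          rw [hwc]; linarith [hstep2]
  -- tsum over k for fixed i
  have hTi : ∀ i : ℕ, (∑' k : ℕ, |u k| * |d (k + i)|)
      ≤ ((i:ℝ)+1) ^ (-(lam/2)) * (rho / 2 * E + 1 / (2 * rho) * X2) := by
    intro i
    have hEwd : Summable (fun k : ℕ => w k * d k ^ 2) := hE
    have hshift : Summable (fun k : ℕ => w (k + i) * d (k + i) ^ 2) :=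
      (summable_nat_add_iff (f := fun k : ℕ => w k * d k ^ 2) i).2 hEwd
    have htsum_shift : (∑' k : ℕ, w (k + i) * d (k + i) ^ 2) ≤ E := by
      have h := Summable.sum_add_tsum_nat_add (f := fun k : ℕ => w k * d k ^ 2) i hEwd
      have hnn : (0:ℝ) ≤ ∑ j ∈ Finset.range i, w j * d j ^ 2 := by
        apply Finset.sum_nonneg; intro j _
        exact mul_nonneg (hwpos j).le (sq_nonneg _)
      rw [hE']; linarith [h]
    have hC1 : (0:ℝ) ≤ rho / 2 * ((i:ℝ)+1) ^ (-(lam/2)) := by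
      have := Real.rpow_nonneg (by positivity : (0:ℝ) ≤ (i:ℝ)+1) (-(lam/2)); positivity
    calc (∑' k : ℕ, |u k| * |d (k + i)|)
        ≤ ∑' k : ℕ, ((rho / 2 * ((i:ℝ)+1) ^ (-(lam/2))) * (w (k + i) * d (k + i) ^ 2)
            + (1 / (2 * rho) * ((i:ℝ)+1) ^ (-(lam/2))) * u k ^ 2) :=
          Summable.tsum_le_tsum (hDpt i) (hgs i) ((hshift.mul_left _).add (hb.mul_left _))
      _ = (rho / 2 * ((i:ℝ)+1) ^ (-(lam/2))) * (∑' k : ℕ, w (k + i) * d (k + i) ^ 2)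
            + (1 / (2 * rho) * ((i:ℝ)+1) ^ (-(lam/2))) * X2 := by
          rw [Summable.tsum_add (hshift.mul_left _) (hb.mul_left _), tsum_mul_left, tsum_mul_left]
      _ ≤ (rho / 2 * ((i:ℝ)+1) ^ (-(lam/2))) * E
            + (1 / (2 * rho) * ((i:ℝ)+1) ^ (-(lam/2))) * X2 := by
          have := mul_le_mul_of_nonneg_left htsum_shift hC1
          linarith
      _ = ((i:ℝ)+1) ^ (-(lam/2)) * (rho / 2 * E + 1 / (2 * rho) * X2) := by ring
  -- sum over i, power sum bound
  have hps : ∑ i ∈ Finset.range (M - 1), ((i:ℝ)+1) ^ (-(lam/2)) ≤ rho := by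
    calc ∑ i ∈ Finset.range (M - 1), ((i:ℝ)+1) ^ (-(lam/2))
        ≤ ((M - 1 : ℕ) : ℝ) ^ ((1:ℝ) - lam/2) / (1 - lam/2) :=
          sum_pow_le_aux (lam/2) (by linarith) (by linarith) (M - 1)
      _ ≤ (M : ℝ) ^ ((1:ℝ) - lam/2) / (1 - lam/2) := by
          gcongr
          all_goals first | omega | linarith
      _ = rho := by
          rw [hrhodef, hc0def]
          field_simp [h2l.ne']
  have hK0 : 0 ≤ rho / 2 * E + 1 / (2 * rho) * X2 := by positivity
  have hSfin : (∑' k, |u k| * D k) ≤ rho * (rho / 2 * E + 1 / (2 * rho) * X2) := by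
    rw [hSC]
    calc ∑ i ∈ Finset.range (M - 1), ∑' k : ℕ, |u k| * |d (k + i)|
        ≤ ∑ i ∈ Finset.range (M - 1), ((i:ℝ)+1) ^ (-(lam/2))
            * (rho / 2 * E + 1 / (2 * rho) * X2) :=
          Finset.sum_le_sum (fun i _ => hTi i)
      _ = (∑ i ∈ Finset.range (M - 1), ((i:ℝ)+1) ^ (-(lam/2)))
            * (rho / 2 * E + 1 / (2 * rho) * X2) := by rw [Finset.sum_mul]
      _ ≤ rho * (rho / 2 * E + 1 / (2 * rho) * X2) :=
          mul_le_mul_of_nonneg_right hps hK0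
  have hrhosq : rho * (rho / 2) = c0 ^ 2 * (M : ℝ) ^ ((2:ℝ) - lam) / 2 := by
    have h1 : ((M : ℝ) ^ ((1:ℝ) - lam/2)) ^ (2:ℕ) = (M : ℝ) ^ ((2:ℝ) - lam) := by
      rw [← Real.rpow_natCast ((M : ℝ) ^ ((1:ℝ) - lam/2)) 2, ← Real.rpow_mul hMpos.le]
      norm_num
      congr 1
      ring
    rw [hrhodef]
    linear_combination (c0 ^ 2 / 2) * h1
  have hfinal : X2 ≤ L * (L / (M:ℝ)) + c0 ^ 2 * (M : ℝ) ^ ((2:ℝ) - lam) / 2 * E + X2 / 2 := by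
    have hx : rho * (1 / (2 * rho)) = 1 / 2 := by
      field_simp
    have h1 : rho * (rho / 2 * E + 1 / (2 * rho) * X2)
        = rho * (rho / 2) * E + X2 / 2 := by
      linear_combination X2 * hx
    calc X2 ≤ L * (L / (M:ℝ)) + ∑' k, |u k| * D k := hXB
      _ ≤ L * (L / (M:ℝ)) + rho * (rho / 2 * E + 1 / (2 * rho) * X2) := by linarith [hSfin]
      _ = L * (L / (M:ℝ)) + rho * (rho / 2) * E + X2 / 2 := by rw [h1]; ring
      _ = L * (L / (M:ℝ)) + c0 ^ 2 * (M : ℝ) ^ ((2:ℝ) - lam) / 2 * E + X2 / 2 := by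
          rw [hrhosq]
  have hLL : 2 * (L * (L / (M:ℝ))) = 2 * L ^ 2 / (M:ℝ) := by ring
  linarith [hfinal]


/-- **Discrete Nash inequality.** For every `λ ∈ [0,2)` there is `C = C(λ) > 0` such that
for all `U ∈ ℓ¹(ℕ) ∩ ℓ²(ℕ)` with finite Dirichlet energy,
`‖U‖₂² ≤ C ‖U‖₁^{2(2−λ)/(3−λ)} E_λ(U)^{1/(3−λ)}`. -/
theorem discrete_nash (lam : ℝ) (hlam0 : 0 ≤ lam) (hlam2 : lam < 2) :
    ∃ C : ℝ, 0 < C ∧ ∀ U : ℕ → ℝ,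
      Summable (fun k : ℕ => |U (k + 1)|) →
      Summable (fun k : ℕ => (U (k + 1)) ^ 2) →
      Summable (fun k : ℕ => ((k : ℝ) + 1) ^ lam * (U (k + 2) - U (k + 1)) ^ 2) →
      (∑' k : ℕ, (U (k + 1)) ^ 2) ≤
        C * (∑' k : ℕ, |U (k + 1)|) ^ (2 * (2 - lam) / (3 - lam)) *
          (discreteEnergy lam U) ^ ((1 : ℝ) / (3 - lam)) := by
  have h2l : (0:ℝ) < 2 - lam := by linarith
  have h3l : (0:ℝ) < 3 - lam := by linarith
  refine ⟨(2 / (2 - lam)) ^ 2 + 4, by positivity, ?_⟩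
  intro U ha hb hE
  have key : ∀ M : ℕ, 1 ≤ M →
      (∑' k : ℕ, (U (k + 1)) ^ 2) ≤
        2 * (∑' k : ℕ, |U (k + 1)|) ^ 2 / (M : ℝ) +
          (2 / (2 - lam)) ^ 2 * (M : ℝ) ^ ((2 : ℝ) - lam) *
            ∑' k : ℕ, ((k : ℝ) + 1) ^ lam * (U (k + 2) - U (k + 1)) ^ 2 :=
    fun M hM => key_ineq lam hlam0 hlam2 (fun k => U (k + 1)) ha hb hE M hM
  set L : ℝ := ∑' k : ℕ, |U (k + 1)| with hLdef
  set X2 : ℝ := ∑' k : ℕ, (U (k + 1)) ^ 2 with hX2def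
  have hEdef : discreteEnergy lam U
      = ∑' k : ℕ, ((k : ℝ) + 1) ^ lam * (U (k + 2) - U (k + 1)) ^ 2 := rfl
  set E : ℝ := ∑' k : ℕ, ((k : ℝ) + 1) ^ lam * (U (k + 2) - U (k + 1)) ^ 2 with hE2def
  rw [hEdef]
  set a : ℝ := 2 * (2 - lam) / (3 - lam) with hadef
  set b : ℝ := (1 : ℝ) / (3 - lam) with hbdef
  have hb0 : 0 < b := by rw [hbdef]; positivity
  have hab2 : a + 2 * b = 2 := by rw [hadef, hbdef]; field_simp; ring
  have hL0 : 0 ≤ L := tsum_nonneg fun k => abs_nonneg _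
  have hE0 : 0 ≤ E := tsum_nonneg fun k => by positivity
  have hX20 : 0 ≤ X2 := tsum_nonneg fun k => sq_nonneg _
  have huL : ∀ k : ℕ, |U (k + 1)| ≤ L := fun k => Summable.le_tsum ha k fun j _ => abs_nonneg _
  have hRHS0 : 0 ≤ ((2 / (2 - lam)) ^ 2 + 4) * L ^ a * E ^ b := by
    have h1 : (0:ℝ) ≤ L ^ a := Real.rpow_nonneg hL0 _
    have h2 : (0:ℝ) ≤ E ^ b := Real.rpow_nonneg hE0 _
    positivity
  clear_value L X2 E a b
  by_cases hUz : ∀ k : ℕ, U (k + 1) = 0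
  · have hX2z : X2 = 0 := by
      rw [hX2def]
      simp [hUz]
    rw [hX2z]
    exact hRHS0
  -- now U is not identically zero on k ≥ 1
  push_neg at hUz
  have hLpos : 0 < L := by
    rcases hUz with ⟨k0, hk0⟩
    have h1 : 0 < |U (k0 + 1)| := abs_pos.mpr hk0
    exact lt_of_lt_of_le h1 (huL k0)
  have hEpos : 0 < E := by
    rcases lt_or_eq_of_le hE0 with h | h
    · exact h
    -- E = 0 : all differences vanish, so U is constant, contradiction with summability
    exfalso
    have hdz : ∀ k : ℕ, U (k + 2) = U (k + 1) := by
      intro k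
      have hle : ((k : ℝ) + 1) ^ lam * (U (k + 2) - U (k + 1)) ^ 2 ≤ E := by
        rw [hE2def]
        exact Summable.le_tsum hE k fun j _ => by positivity
      have hnn : 0 ≤ ((k : ℝ) + 1) ^ lam * (U (k + 2) - U (k + 1)) ^ 2 := by positivity
      have heq : ((k : ℝ) + 1) ^ lam * (U (k + 2) - U (k + 1)) ^ 2 = 0 := le_antisymm (h ▸ hle) hnn
      have hwpos : (0:ℝ) < ((k : ℝ) + 1) ^ lam := Real.rpow_pos_of_pos (by positivity) _
      have : (U (k + 2) - U (k + 1)) ^ 2 = 0 := by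
        rcases mul_eq_zero.mp heq with h' | h'
        · exact absurd h' hwpos.ne'
        · exact h'
      have := pow_eq_zero_iff (n := 2) (by norm_num) |>.mp this
      linarith [this]
    have hconst : ∀ k : ℕ, U (k + 1) = U 1 := by
      intro k
      induction k with
      | zero => rfl
      | succ n ih => rw [← ih]; exact hdz n
    have htend : Filter.Tendsto (fun k : ℕ => |U (k + 1)|) Filter.atTop (nhds 0) :=
      ha.tendsto_atTop_zero
    have hconst' : (fun k : ℕ => |U (k + 1)|) = fun _ => |U 1| := by
      funext k; rw [hconst k]
    rw [hconst'] at htend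
    have hU1 : |U 1| = 0 := tendsto_nhds_unique tendsto_const_nhds htend
    rcases hUz with ⟨k0, hk0⟩
    have := hconst k0
    rw [abs_eq_zero] at hU1
    rw [hU1] at this
    exact hk0 this
  -- main case
  set l : ℝ := Real.log L with hldef
  set e : ℝ := Real.log E with hedef
  clear_value l e
  have hL2pos : (0:ℝ) < L ^ 2 := by positivity
  have hLa : L ^ a = Real.exp (a * l) := by
    rw [Real.rpow_def_of_pos hLpos, hldef]; ring_nf
  have hEb : E ^ b = Real.exp (b * e) := by
    rw [Real.rpow_def_of_pos hEpos, hedef]; ring_nf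
  have hL2e : L ^ 2 = Real.exp (2 * l) := by
    rw [hldef, ← Real.exp_log hL2pos, Real.log_pow]
    norm_num
  have hEe : E = Real.exp e := by rw [hedef]; exact (Real.exp_log hEpos).symm
  set t : ℝ := (L ^ 2 / E) ^ b with htdef
  clear_value t
  have htpos : 0 < t := by rw [htdef]; exact Real.rpow_pos_of_pos (div_pos hL2pos hEpos) _
  have hte : t = Real.exp (b * (2 * l - e)) := by
    rw [htdef, Real.rpow_def_of_pos (by positivity), Real.log_div hL2pos.ne' hEpos.ne',
      Real.log_pow, hldef, hedef]
    ring_nf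
  rcases le_or_gt t 1 with ht | ht
  · -- small t : use X2 ≤ L^2 ≤ L^a E^b
    have hLE : L ^ 2 ≤ E := by
      by_contra hcon
      push_neg at hcon
      have h1 : (1:ℝ) < L ^ 2 / E := by rw [lt_div_iff₀ hEpos]; linarith
      have h2 : 1 < t := by
        rw [htdef]
        rw [Real.one_lt_rpow_iff_of_pos (by positivity)]
        left; exact ⟨h1, hb0⟩
      linarith
    have hX2L : X2 ≤ L ^ 2 := by
      have hpt : ∀ k : ℕ, (U (k + 1)) ^ 2 ≤ |U (k + 1)| * L := by
        intro k
        have h1 : (U (k + 1)) ^ 2 = |U (k + 1)| * |U (k + 1)| := by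
          rw [abs_mul_abs_self]; ring
        rw [h1]
        exact mul_le_mul_of_nonneg_left (huL k) (abs_nonneg _)
      calc X2 = ∑' k : ℕ, (U (k + 1)) ^ 2 := hX2def
        _ ≤ ∑' k : ℕ, |U (k + 1)| * L := Summable.tsum_le_tsum hpt hb (ha.mul_right L)
        _ = L * L := by rw [tsum_mul_right, ← hLdef]
        _ = L ^ 2 := by ring
    have hlog : 2 * l ≤ a * l + b * e := by
      have h1 : Real.log (L ^ 2) ≤ Real.log E := by
        rw [Real.log_le_log_iff hL2pos hEpos]; exact hLE
      rw [Real.log_pow] at h1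
      push_cast at h1
      have h2 : 0 ≤ e - 2 * l := by rw [hldef, hedef]; linarith [h1]
      have h3 : a * l + b * e - 2 * l = b * (e - 2 * l) := by linear_combination l * hab2
      have h4 := mul_nonneg hb0.le h2
      linarith
    have hmono : L ^ 2 ≤ L ^ a * E ^ b := by
      rw [hL2e, hLa, hEb, ← Real.exp_add]
      exact Real.exp_le_exp.mpr hlog
    have hC1 : (1:ℝ) ≤ (2 / (2 - lam)) ^ 2 + 4 := by nlinarith [sq_nonneg (2 / (2 - lam))]
    calc X2 ≤ L ^ a * E ^ b := le_trans hX2L hmono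
      _ ≤ ((2 / (2 - lam)) ^ 2 + 4) * L ^ a * E ^ b := by
          nlinarith [Real.rpow_nonneg hL0 a, Real.rpow_nonneg hE0 b,
            mul_nonneg (Real.rpow_nonneg hL0 a) (Real.rpow_nonneg hE0 b)]
  · -- large t : optimize M = ⌊t⌋₊
    set M : ℕ := ⌊t⌋₊ with hMdef
    have hM1 : 1 ≤ M := Nat.le_floor (by exact_mod_cast ht.le)
    have hMR : (1:ℝ) ≤ (M:ℝ) := by exact_mod_cast hM1
    have hMpos : (0:ℝ) < (M:ℝ) := by linarith
    have hMt : (M:ℝ) ≤ t := Nat.floor_le htpos.le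
    have htM : t ≤ 2 * (M:ℝ) := by
      have := Nat.lt_floor_add_one t
      push_cast at this ⊢
      linarith
    clear_value M
    have hkey := key M hM1
    have h1 : 2 * L ^ 2 / (M:ℝ) ≤ 4 * (L ^ 2 / t) := by
      have ha1 : 2 * L ^ 2 / (M:ℝ) ≤ 2 * L ^ 2 / (t / 2) :=
        div_le_div_of_nonneg_left (by positivity) (by linarith) (by linarith)
      have ha2 : 2 * L ^ 2 / (t / 2) = 4 * (L ^ 2 / t) := by
        rw [div_div_eq_mul_div]
        ring
      linarith
    have h2 : (M:ℝ) ^ ((2:ℝ) - lam) ≤ t ^ ((2:ℝ) - lam) :=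
      Real.rpow_le_rpow hMpos.le hMt (by linarith)
    have hI1 : L ^ 2 / t = L ^ a * E ^ b := by
      rw [hL2e, hte, hLa, hEb, ← Real.exp_sub, ← Real.exp_add]
      congr 1
      rw [hadef, hbdef]
      have hinv : (3 - lam) * (1 / (3 - lam)) = 1 := by field_simp
      linear_combination (-2 * l) * hinv
    have hI2 : t ^ ((2:ℝ) - lam) * E = L ^ a * E ^ b := by
      rw [hte, ← Real.exp_mul, hLa, hEb, hEe, ← Real.exp_add, ← Real.exp_add]
      congr 1
      rw [hadef, hbdef]
      have hinv : (3 - lam) * (1 / (3 - lam)) = 1 := by field_simp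
      linear_combination (-e) * hinv
    have hEbnn : 0 ≤ L ^ a * E ^ b :=
      mul_nonneg (Real.rpow_nonneg hL0 _) (Real.rpow_nonneg hE0 _)
    calc X2 ≤ 2 * L ^ 2 / (M:ℝ) + (2 / (2 - lam)) ^ 2 * (M:ℝ) ^ ((2:ℝ) - lam) * E := hkey
      _ ≤ 4 * (L ^ 2 / t) + (2 / (2 - lam)) ^ 2 * t ^ ((2:ℝ) - lam) * E := by
          have hKnn : (0:ℝ) ≤ (2 / (2 - lam)) ^ 2 := sq_nonneg _
          have h3 : (2 / (2 - lam)) ^ 2 * (M:ℝ) ^ ((2:ℝ) - lam) * E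
              ≤ (2 / (2 - lam)) ^ 2 * t ^ ((2:ℝ) - lam) * E :=
            mul_le_mul_of_nonneg_right (mul_le_mul_of_nonneg_left h2 hKnn) hE0
          linarith
      _ = ((2 / (2 - lam)) ^ 2 + 4) * L ^ a * E ^ b := by
          rw [mul_assoc ((2 / (2 - lam)) ^ 2), hI2, hI1]
          ring
end

section
/- Let λ ∈ [0,2) and let f : [0,∞) → [0,∞) be a nonnegative function in H¹_loc([0,∞)) with ℰ_λ(f) = ∫₀^∞ x^λ |f′(x)|² dx < ∞ and with |{x : f(x) > t}| < ∞ for every t > 0. Let f* denote the nonincreasing rearrangement of f on [0,∞) (the nonincreasing right-continuous function equimeasurable with f). Then ℰ_λ(f*) ≤ ℰ_λ(f). -/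
open MeasureTheory Set
open Filter Topology

noncomputable section

/-- The nonincreasing rearrangement of a nonnegative function `f` on `[0,∞)`:
`f*(x) = inf{t > 0 : |{y ≥ 0 : f(y) > t}| ≤ x}`. -/
def rearrangement (f : ℝ → ℝ) (x : ℝ) : ℝ :=
  sInf {t : ℝ | 0 < t ∧ volume {y : ℝ | 0 ≤ y ∧ t < f y} ≤ ENNReal.ofReal x}

namespace PSaux

variable {f f' : ℝ → ℝ}

/-- continuity of `f` on `[0,∞)` from the FTC hypothesis -/
lemma contOn (hAC : ∀ a b : ℝ, 0 ≤ a → a ≤ b →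
    IntervalIntegrable f' volume a b ∧ (∫ x in a..b, f' x) = f b - f a) :
    ContinuousOn f (Ici 0) := by
  intro y hy
  simp only [mem_Ici] at hy
  have hInt : IntegrableOn f' (Icc 0 (y+1)) volume := by
    have h := (hAC 0 (y+1) le_rfl (by linarith)).1
    rw [intervalIntegrable_iff] at h
    have : IntegrableOn f' (Ioc 0 (y+1)) volume := by
      simpa [uIoc_of_le (show (0:ℝ) ≤ y+1 by linarith)] using h
    exact this.congr_set_ae Ioc_ae_eq_Icc.symm |>.mono_set (by rfl)
  have hcont : ContinuousOn (fun x => ∫ t in Ioc 0 x, f' t) (Icc 0 (y+1)) :=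
    intervalIntegral.continuousOn_primitive hInt
  have hcongr : ∀ z ∈ Icc (0:ℝ) (y+1), f z = f 0 + ∫ t in Ioc 0 z, f' t := by
    intro z hz
    have h := (hAC 0 z le_rfl hz.1).2
    rw [intervalIntegral.integral_of_le hz.1] at h
    linarith
  have hcont2 : ContinuousOn f (Icc 0 (y+1)) := by
    refine (ContinuousOn.congr ?_ hcongr)
    exact continuousOn_const.add hcont
  have hmem : Icc (0:ℝ) (y+1) ∈ nhdsWithin y (Ici 0) := by
    have : Iic (y+1) ∈ nhds y := Iic_mem_nhds (by linarith)
    have h2 : Ici 0 ∩ Iic (y+1) ∈ nhdsWithin y (Ici 0) := inter_mem_nhdsWithin _ this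
    have : Ici (0:ℝ) ∩ Iic (y+1) = Icc 0 (y+1) := by
      ext z; simp [Icc, and_comm]
    rwa [this] at h2
  exact (hcont2 y ⟨hy, by linarith⟩).mono_of_mem_nhdsWithin hmem

lemma isOpen_pos_level (hc : ContinuousOn f (Ici 0)) (t : ℝ) :
    IsOpen {y : ℝ | 0 < y ∧ t < f y} := by
  rw [isOpen_iff_mem_nhds]
  rintro y ⟨hy0, hyt⟩
  have hca : ContinuousAt f y :=
    (hc y (le_of_lt hy0)).continuousAt (Ici_mem_nhds hy0)
  have h1 : f ⁻¹' (Ioi t) ∈ nhds y := hca.preimage_mem_nhds (Ioi_mem_nhds hyt)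
  have h2 : Ioi (0:ℝ) ∈ nhds y := Ioi_mem_nhds hy0
  filter_upwards [h1, h2] with z hz1 hz2
  exact ⟨hz2, hz1⟩

lemma meas_level (hc : ContinuousOn f (Ici 0)) (t : ℝ) :
    MeasurableSet {y : ℝ | 0 ≤ y ∧ t < f y} := by
  have h1 : {y : ℝ | 0 ≤ y ∧ t < f y}
      = {y : ℝ | 0 < y ∧ t < f y} ∪ ({y : ℝ | 0 ≤ y ∧ t < f y} ∩ {0}) := by
    ext y
    constructor
    · rintro ⟨hy0, hyt⟩
      rcases eq_or_lt_of_le hy0 with h | h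
      · exact Or.inr ⟨⟨hy0, hyt⟩, by simp [← h]⟩
      · exact Or.inl ⟨h, hyt⟩
    · rintro (⟨h1, h2⟩ | ⟨h1, _⟩)
      · exact ⟨le_of_lt h1, h2⟩
      · exact h1
  rw [h1]
  exact ((isOpen_pos_level hc t).measurableSet).union
    (((Set.subsingleton_singleton).anti inter_subset_right).measurableSet)

/-- the superlevel-measure tends to 0; existence of levels with small measure -/
lemma exists_small_level (hc : ContinuousOn f (Ici 0))
    (hlevel : ∀ t : ℝ, 0 < t → volume {y : ℝ | 0 ≤ y ∧ t < f y} < ⊤)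
    {e : ENNReal} (he : 0 < e) : ∃ t : ℝ, 0 < t ∧ volume {y : ℝ | 0 ≤ y ∧ t < f y} ≤ e := by
  set s : ℕ → Set ℝ := fun n => {y : ℝ | 0 ≤ y ∧ ((n:ℝ)+1) < f y} with hs
  have hmeas : ∀ n, NullMeasurableSet (s n) volume :=
    fun n => (meas_level hc _).nullMeasurableSet
  have hanti : Antitone s := by
    intro m n hmn y hy
    have hc' : (m:ℝ) ≤ (n:ℝ) := Nat.cast_le.2 hmn
    exact ⟨hy.1, lt_of_le_of_lt (by linarith) hy.2⟩
  have hfin : ∃ n, volume (s n) ≠ ⊤ := by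
    refine ⟨0, ?_⟩
    have := hlevel ((0:ℕ)+1) (by norm_num)
    simp only [hs]
    norm_num
    have := hlevel 1 one_pos
    exact this.ne
  have hempty : ⋂ n, s n = ∅ := by
    ext y
    simp only [mem_iInter, mem_empty_iff_false, iff_false]
    intro h
    obtain ⟨n, hn⟩ := exists_nat_ge (f y)
    exact absurd ((h n).2) (by push_neg; linarith)
  have htend := MeasureTheory.tendsto_measure_iInter_atTop hmeas hanti hfin
  rw [hempty] at htend
  simp only [measure_empty] at htend
  have : ∀ᶠ n in atTop, volume (s n) < e := htend.eventually_lt_const he |>.mono (by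
    intro n hn; simpa using hn)
  obtain ⟨n, hn⟩ := this.exists
  exact ⟨(n:ℝ)+1, by positivity, hn.le⟩


lemma re_nonneg (f : ℝ → ℝ) (x : ℝ) : 0 ≤ rearrangement f x :=
  Real.sInf_nonneg (fun _ ht => ht.1.le)

lemma S_bddBelow (f : ℝ → ℝ) (x : ℝ) :
    BddBelow {t : ℝ | 0 < t ∧ volume {y : ℝ | 0 ≤ y ∧ t < f y} ≤ ENNReal.ofReal x} :=
  ⟨0, fun _ ht => ht.1.le⟩

lemma S_nonempty (hc : ContinuousOn f (Ici 0))
    (hlevel : ∀ t : ℝ, 0 < t → volume {y : ℝ | 0 ≤ y ∧ t < f y} < ⊤)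
    {x : ℝ} (hx : 0 < x) :
    {t : ℝ | 0 < t ∧ volume {y : ℝ | 0 ≤ y ∧ t < f y} ≤ ENNReal.ofReal x}.Nonempty := by
  obtain ⟨t, ht, hle⟩ := exists_small_level hc hlevel (ENNReal.ofReal_pos.2 hx)
  exact ⟨t, ht, hle⟩

lemma re_antitone (hc : ContinuousOn f (Ici 0))
    (hlevel : ∀ t : ℝ, 0 < t → volume {y : ℝ | 0 ≤ y ∧ t < f y} < ⊤)
    {a b : ℝ} (ha : 0 < a) (hab : a ≤ b) :
    rearrangement f b ≤ rearrangement f a := by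
  refine csInf_le_csInf (S_bddBelow f b) (S_nonempty hc hlevel ha) ?_
  intro t ht
  exact ⟨ht.1, ht.2.trans (ENNReal.ofReal_le_ofReal hab)⟩

/-- below the rearrangement value the superlevel sets are large -/
lemma measure_gt {x u : ℝ} (hu : 0 < u) (hux : u < rearrangement f x) :
    ENNReal.ofReal x < volume {y : ℝ | 0 ≤ y ∧ u < f y} := by
  by_contra h
  push_neg at h
  have : rearrangement f x ≤ u := csInf_le (S_bddBelow f x) ⟨hu, h⟩
  linarith


lemma key_E (lam : ℝ) (hlam0 : 0 ≤ lam)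
    (hc : ContinuousOn f (Ici 0))
    (hAC : ∀ a b : ℝ, 0 ≤ a → a ≤ b →
      IntervalIntegrable f' volume a b ∧ (∫ x in a..b, f' x) = f b - f a)
    (hlevel : ∀ t : ℝ, 0 < t → volume {y : ℝ | 0 ≤ y ∧ t < f y} < ⊤)
    (hE : (∫⁻ x in Set.Ioi (0 : ℝ), ENNReal.ofReal (x ^ lam * f' x ^ 2)) < ⊤)
    {x h u v : ℝ} (hx : 0 < x) (hh : 0 < h)
    (hu0 : 0 < u) (hux : u < rearrangement f x)
    (hv0 : 0 < v) (hvu : v < u)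
    (hvmem : volume {y : ℝ | 0 ≤ y ∧ v < f y} ≤ ENNReal.ofReal (x + h))
    (hvge : rearrangement f (x + h) ≤ v) :
    ENNReal.ofReal ((u - v)^2 * x ^ lam / h) +
      (∫⁻ y in {y : ℝ | 0 < y ∧ rearrangement f x < f y},
        ENNReal.ofReal (y ^ lam * f' y ^ 2)) ≤
      ∫⁻ y in {y : ℝ | 0 < y ∧ rearrangement f (x + h) < f y},
        ENNReal.ofReal (y ^ lam * f' y ^ 2) := by
  have huv : 0 < u - v := by linarith
  -- step 1 : a point beyond x with large value
  have h1 : ∃ y₀, x < y₀ ∧ u < f y₀ := by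
    by_contra hcon
    push_neg at hcon
    have hsub : {y : ℝ | 0 ≤ y ∧ u < f y} ⊆ Icc 0 x := by
      rintro y ⟨hy0, hyu⟩
      refine ⟨hy0, ?_⟩
      by_contra hxy
      push_neg at hxy
      exact absurd (hcon y hxy) (by linarith)
    have hle : volume {y : ℝ | 0 ≤ y ∧ u < f y} ≤ ENNReal.ofReal x := by
      calc volume {y : ℝ | 0 ≤ y ∧ u < f y} ≤ volume (Icc 0 x) := measure_mono hsub
        _ = ENNReal.ofReal x := by rw [Real.volume_Icc]; norm_num
    exact absurd hle (measure_gt hu0 hux).not_ge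
  obtain ⟨y₀, hy₀x, hfy₀⟩ := h1
  have hy₀0 : 0 < y₀ := hx.trans hy₀x
  -- step 2 : a point beyond y₀ with small value
  have h2 : ∃ z, y₀ < z ∧ f z ≤ v := by
    by_contra hcon
    push_neg at hcon
    have hsub : Ioi y₀ ⊆ {y : ℝ | 0 ≤ y ∧ v < f y} := by
      intro z hz
      exact ⟨(hy₀0.trans hz).le, hcon z hz⟩
    have : (⊤ : ENNReal) ≤ ENNReal.ofReal (x + h) := by
      calc (⊤ : ENNReal) = volume (Ioi y₀) := (Real.volume_Ioi).symm
        _ ≤ volume {y : ℝ | 0 ≤ y ∧ v < f y} := measure_mono hsub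
        _ ≤ ENNReal.ofReal (x + h) := hvmem
    exact absurd (this.trans_lt ENNReal.ofReal_lt_top).ne (by simp)
  obtain ⟨z, hy₀z, hfz⟩ := h2
  -- step 3 : first crossing of level v after y₀
  set D : Set ℝ := {w : ℝ | y₀ ≤ w ∧ f w ≤ v} with hD
  have hDclosed : IsClosed D := by
    have : D = Ici y₀ ∩ f ⁻¹' (Iic v) := by ext w; simp [hD, and_comm]
    rw [this]
    exact (hc.mono (Ici_subset_Ici.2 hy₀0.le)).preimage_isClosed_of_isClosed
      isClosed_Ici isClosed_Iic
  have hDne : D.Nonempty := ⟨z, hy₀z.le, hfz⟩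
  have hDbdd : BddBelow D := ⟨y₀, fun w hw => hw.1⟩
  set c := sInf D with hcdef
  have hcD : c ∈ D := hDclosed.csInf_mem hDne hDbdd
  have hy₀c : y₀ ≤ c := le_csInf hDne (fun w hw => hw.1)
  have hfc : f c ≤ v := hcD.2
  have hy₀c' : y₀ < c := by
    rcases lt_or_eq_of_le hy₀c with hlt | heq
    · exact hlt
    · exfalso; rw [← heq] at hfc; linarith
  have habove : ∀ w, y₀ ≤ w → w < c → v < f w := by
    intro w hw1 hw2
    by_contra hcon
    push_neg at hcon
    exact absurd (csInf_le hDbdd ⟨hw1, hcon⟩) (not_le.2 hw2)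
  -- step 4 : last time the level u is exceeded before c
  set E : Set ℝ := {w : ℝ | w ∈ Icc y₀ c ∧ u ≤ f w} with hEdef
  have hEclosed : IsClosed E := by
    have : E = Icc y₀ c ∩ f ⁻¹' (Ici u) := by ext w; simp [hEdef, and_comm]
    rw [this]
    exact (hc.mono (fun w hw => hy₀0.le.trans hw.1)).preimage_isClosed_of_isClosed
      isClosed_Icc isClosed_Ici
  have hEne : E.Nonempty := ⟨y₀, ⟨le_rfl, hy₀c⟩, hfy₀.le⟩
  have hEbdd : BddAbove E := ⟨c, fun w hw => hw.1.2⟩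
  set b' := sSup E with hb'def
  have hb'E : b' ∈ E := hEclosed.csSup_mem hEne hEbdd
  have hfb' : u ≤ f b' := hb'E.2
  have hy₀b' : y₀ ≤ b' := hb'E.1.1
  have hb'c : b' ≤ c := hb'E.1.2
  have hb'c' : b' < c := by
    rcases lt_or_eq_of_le hb'c with hlt | heq
    · exact hlt
    · exfalso; rw [heq] at hfb'; linarith
  have hbelow : ∀ w, b' < w → w ≤ c → f w < u := by
    intro w hw1 hw2
    by_contra hcon
    push_neg at hcon
    exact absurd (le_csSup hEbdd ⟨⟨hy₀b'.trans hw1.le, hw2⟩, hcon⟩) (not_le.2 hw1)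
  have hxb' : x < b' := hy₀x.trans_le hy₀b'
  have hb'0 : 0 < b' := hx.trans hxb'
  -- values in the band on Ioo b' c
  have hband : ∀ y ∈ Ioo b' c, v < f y ∧ f y < u := by
    rintro y ⟨hy1, hy2⟩
    exact ⟨habove y (hy₀b'.trans hy1.le) hy2, hbelow y hy1 hy2.le⟩
  -- step 5 : length bound
  have hlen : c - b' ≤ h := by
    have hsub1 : Ioo b' c ⊆ {y : ℝ | 0 ≤ y ∧ v < f y} := by
      intro y hy
      exact ⟨(hb'0.trans hy.1).le, (hband y hy).1⟩
    have hsub2 : {y : ℝ | 0 ≤ y ∧ u < f y} ⊆ {y : ℝ | 0 ≤ y ∧ v < f y} \ Ioo b' c := by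
      rintro y ⟨hy0, hyu⟩
      refine ⟨⟨hy0, by linarith⟩, ?_⟩
      intro hmem
      exact absurd (hband y hmem).2 (by linarith)
    have hadd := measure_inter_add_diff (μ := volume) {y : ℝ | 0 ≤ y ∧ v < f y} (measurableSet_Ioo (a := b') (b := c))
    have hIoo : {y : ℝ | 0 ≤ y ∧ v < f y} ∩ Ioo b' c = Ioo b' c :=
      inter_eq_self_of_subset_right hsub1
    have hchain : ENNReal.ofReal (c - b') + ENNReal.ofReal x ≤ ENNReal.ofReal (x + h) := by
      calc ENNReal.ofReal (c - b') + ENNReal.ofReal x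
          ≤ volume (Ioo b' c) + volume {y : ℝ | 0 ≤ y ∧ u < f y} := by
            rw [Real.volume_Ioo]
            exact add_le_add le_rfl (measure_gt hu0 hux).le
        _ ≤ volume (Ioo b' c) + volume ({y : ℝ | 0 ≤ y ∧ v < f y} \ Ioo b' c) :=
            add_le_add le_rfl (measure_mono hsub2)
        _ = volume {y : ℝ | 0 ≤ y ∧ v < f y} := by rw [← hadd, hIoo]
        _ ≤ ENNReal.ofReal (x + h) := hvmem
    rw [ENNReal.ofReal_add hx.le hh.le, add_comm (ENNReal.ofReal x)] at hchain
    have := (ENNReal.add_le_add_iff_right (ENNReal.ofReal_ne_top (r := x))).1 hchain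
    exact (ENNReal.ofReal_le_ofReal_iff hh.le).1 this
  -- step 6 : integrability facts
  set P : ℝ → ℝ := fun y => y ^ (-lam) with hPdef
  set Y : ℝ → ℝ := fun y => y ^ lam * f' y ^ 2 with hYdef
  have hIIf' : IntervalIntegrable f' volume b' c := (hAC b' c hb'0.le hb'c).1
  have hIIP : IntervalIntegrable P volume b' c := by
    apply ContinuousOn.intervalIntegrable
    rw [uIcc_of_le hb'c]
    intro y hy
    have hy0 : y ≠ 0 := ne_of_gt (lt_of_lt_of_le hb'0 hy.1)
    exact (Real.continuousAt_rpow_const y (-lam) (Or.inl hy0)).continuousWithinAt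
  have hYnn : ∀ y : ℝ, 0 < y → 0 ≤ Y y := fun y hy =>
    mul_nonneg (Real.rpow_nonneg hy.le _) (sq_nonneg _)
  have hIntY : IntegrableOn Y (Ioc b' c) volume := by
    constructor
    · have hf'm : AEStronglyMeasurable f' (volume.restrict (Ioc b' c)) := by
        have h2 := hIIf'
        rw [intervalIntegrable_iff, uIoc_of_le hb'c] at h2
        exact h2.1
      have hrm : Measurable (fun y : ℝ => y ^ lam) :=
        (continuous_iff_continuousAt.2 fun y =>
          Real.continuousAt_rpow_const y lam (Or.inr hlam0)).measurable
      have : AEStronglyMeasurable (fun y : ℝ => y ^ lam * (f' y * f' y))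
          (volume.restrict (Ioc b' c)) :=
        hrm.aestronglyMeasurable.mul (hf'm.mul hf'm)
      refine this.congr (ae_of_all _ fun y => ?_)
      simp only [hYdef]; ring
    · rw [hasFiniteIntegral_iff_ofReal]
      · refine lt_of_le_of_lt ?_ hE
        have hsub : Ioc b' c ⊆ Ioi (0:ℝ) := fun y hy => hb'0.trans hy.1
        exact lintegral_mono' (Measure.restrict_mono hsub le_rfl) le_rfl
      · refine (ae_restrict_iff' measurableSet_Ioc).2 (ae_of_all _ ?_)
        intro y hy
        exact hYnn y (hb'0.trans hy.1)
  have hIIY : IntervalIntegrable Y volume b' c := by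
    rw [intervalIntegrable_iff, uIoc_of_le hb'c]; exact hIntY
  set A := ∫ y in b'..c, P y with hAdef
  set B := ∫ y in b'..c, Y y with hBdef
  have hApos : 0 < A := by
    have hconst : ∀ y ∈ Icc b' c, c ^ (-lam) ≤ P y := by
      intro y hy
      exact Real.rpow_le_rpow_of_nonpos (hb'0.trans_le hy.1) hy.2 (neg_nonpos.2 hlam0)
    have h2 : (c - b') * c ^ (-lam) ≤ A := by
      have := intervalIntegral.integral_mono_on hb'c
        (intervalIntegrable_const (c := c ^ (-lam))) hIIP hconst
      simpa [intervalIntegral.integral_const, smul_eq_mul] using this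
    have hcpos : (0:ℝ) < c := hb'0.trans hb'c'
    nlinarith [Real.rpow_pos_of_pos hcpos (-lam), hb'c']
  have hAle : A ≤ h * x ^ (-lam) := by
    have hconst : ∀ y ∈ Icc b' c, P y ≤ x ^ (-lam) := by
      intro y hy
      exact Real.rpow_le_rpow_of_nonpos hx (hxb'.le.trans hy.1) (neg_nonpos.2 hlam0)
    have h2 : A ≤ (c - b') * x ^ (-lam) := by
      have := intervalIntegral.integral_mono_on hb'c hIIP
        (intervalIntegrable_const (c := x ^ (-lam))) hconst
      simpa [intervalIntegral.integral_const, smul_eq_mul] using this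
    refine h2.trans ?_
    exact mul_le_mul_of_nonneg_right hlen (Real.rpow_nonneg hx.le _)
  have hBnn : 0 ≤ B :=
    intervalIntegral.integral_nonneg hb'c (fun y hy => hYnn y (hb'0.trans_le hy.1))
  -- step 7 : the gradient estimate
  have huvle : u - v ≤ ∫ y in b'..c, |f' y| := by
    have hint := (hAC b' c hb'0.le hb'c).2
    have h2 : ∫ y in b'..c, -(f' y) = f b' - f c := by
      rw [intervalIntegral.integral_neg, hint]; ring
    calc u - v ≤ f b' - f c := by linarith
      _ = ∫ y in b'..c, -(f' y) := h2.symm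
      _ ≤ ∫ y in b'..c, |f' y| :=
          intervalIntegral.integral_mono_on hb'c hIIf'.neg hIIf'.abs
            (fun y _ => neg_le_abs _)
  set s := (u - v) / A with hsdef
  have hs : 0 < s := div_pos huv hApos
  have hptw : ∀ y ∈ Icc b' c, |f' y| ≤ (s * P y + Y y / s) / 2 := by
    intro y hy
    have hy0 : 0 < y := hb'0.trans_le hy.1
    have hq : 0 < y ^ lam := Real.rpow_pos_of_pos hy0 lam
    have hpq : y ^ (-lam) * y ^ lam = 1 := by
      rw [← Real.rpow_add hy0]; simp
    have hp_eq : y ^ (-lam) = 1 / y ^ lam := eq_one_div_of_mul_eq_one_right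
      (by rw [mul_comm]; exact hpq)
    set a := |f' y| with hadef
    have hnum : 0 ≤ s ^ 2 + (y ^ lam * a) ^ 2 - 2 * a * s * y ^ lam := by
      nlinarith [sq_nonneg (s - y ^ lam * a)]
    have hiden : (s * (y ^ (-lam)) + (y ^ lam * (f' y) ^ 2) / s) / 2 - a
        = (s ^ 2 + (y ^ lam * a) ^ 2 - 2 * a * s * y ^ lam) / (2 * s * y ^ lam) := by
      rw [hp_eq, show (f' y) ^ 2 = a ^ 2 from (sq_abs _).symm]
      field_simp
    have h3 : 0 ≤ (s * P y + Y y / s)/2 - |f' y| := by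
      rw [show P y = y ^ (-lam) from rfl, show Y y = y ^ lam * (f' y)^2 from rfl, hiden]
      exact div_nonneg hnum (by positivity)
    linarith
  have hII2 : IntervalIntegrable (fun y => (s * P y + Y y / s) / 2) volume b' c :=
    ((hIIP.const_mul s).add (hIIY.div_const s)).div_const 2
  have heval : (∫ y in b'..c, (s * P y + Y y / s) / 2) = (s * A + B / s) / 2 := by
    rw [intervalIntegral.integral_div,
      intervalIntegral.integral_add (hIIP.const_mul s) (hIIY.div_const s),
      intervalIntegral.integral_const_mul, intervalIntegral.integral_div]
  have hkey : u - v ≤ (s * A + B / s) / 2 := by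
    calc u - v ≤ ∫ y in b'..c, |f' y| := huvle
      _ ≤ ∫ y in b'..c, (s * P y + Y y / s) / 2 :=
          intervalIntegral.integral_mono_on hb'c hIIf'.abs hII2 hptw
      _ = (s * A + B / s) / 2 := heval
  have hAB : (u - v)^2 ≤ A * B := by
    have hsA : s * A = u - v := div_mul_cancel₀ _ hApos.ne'
    rw [hsA] at hkey
    have h1 : u - v ≤ B / s := by linarith
    have h2 : (u - v) * s ≤ B := (le_div_iff₀ hs).1 h1
    have h3 : (u - v) * ((u - v) / A) ≤ B := by rw [← hsdef]; exact h2
    calc (u - v)^2 = ((u - v) * ((u - v) / A)) * A := by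
          field_simp
      _ ≤ B * A := mul_le_mul_of_nonneg_right h3 hApos.le
      _ = A * B := mul_comm _ _
  have hfinalreal : (u - v)^2 * x ^ lam / h ≤ B := by
    have h1 : (u - v)^2 ≤ h * x ^ (-lam) * B :=
      hAB.trans (mul_le_mul_of_nonneg_right hAle hBnn)
    have hxl : 0 < x ^ lam := Real.rpow_pos_of_pos hx lam
    have hxinv : x ^ (-lam) * x ^ lam = 1 := by rw [← Real.rpow_add hx]; simp
    rw [div_le_iff₀ hh]
    calc (u - v)^2 * x ^ lam ≤ (h * x ^ (-lam) * B) * x ^ lam :=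
        mul_le_mul_of_nonneg_right h1 hxl.le
      _ = B * h * (x ^ (-lam) * x ^ lam) := by ring
      _ = B * h := by rw [hxinv, mul_one]
  -- step 8 : pass to ENNReal and conclude
  have hO1meas : MeasurableSet {y : ℝ | 0 < y ∧ rearrangement f x < f y} :=
    (isOpen_pos_level hc _).measurableSet
  have hBlift : ENNReal.ofReal B = ∫⁻ y in Ioo b' c, ENNReal.ofReal (y ^ lam * f' y ^ 2) := by
    have hB2 : B = ∫ y in Ioo b' c, Y y := by
      rw [hBdef, intervalIntegral.integral_of_le hb'c, integral_Ioc_eq_integral_Ioo]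
    rw [hB2]
    rw [ofReal_integral_eq_lintegral_ofReal (hIntY.mono_set Ioo_subset_Ioc_self) ?_]
    · refine (ae_restrict_iff' measurableSet_Ioo).2 (ae_of_all _ ?_)
      intro y hy
      exact hYnn y (hb'0.trans hy.1)
  have hdisj : Disjoint (Ioo b' c) {y : ℝ | 0 < y ∧ rearrangement f x < f y} := by
    rw [Set.disjoint_left]
    intro y hy hyO
    have := (hband y hy).2
    have := hyO.2
    linarith
  have hsubU : Ioo b' c ∪ {y : ℝ | 0 < y ∧ rearrangement f x < f y}
      ⊆ {y : ℝ | 0 < y ∧ rearrangement f (x + h) < f y} := by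
    rintro y (hy | hy)
    · exact ⟨hb'0.trans hy.1, by linarith [(hband y hy).1]⟩
    · exact ⟨hy.1, lt_of_le_of_lt (re_antitone hc hlevel hx (by linarith)) hy.2⟩
  calc ENNReal.ofReal ((u - v)^2 * x ^ lam / h) +
        ∫⁻ y in {y : ℝ | 0 < y ∧ rearrangement f x < f y}, ENNReal.ofReal (y ^ lam * f' y ^ 2)
      ≤ ENNReal.ofReal B +
        ∫⁻ y in {y : ℝ | 0 < y ∧ rearrangement f x < f y}, ENNReal.ofReal (y ^ lam * f' y ^ 2) :=
        add_le_add (ENNReal.ofReal_le_ofReal hfinalreal) le_rfl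
    _ = (∫⁻ y in Ioo b' c, ENNReal.ofReal (y ^ lam * f' y ^ 2)) +
        ∫⁻ y in {y : ℝ | 0 < y ∧ rearrangement f x < f y}, ENNReal.ofReal (y ^ lam * f' y ^ 2) := by
        rw [hBlift]
    _ = ∫⁻ y in Ioo b' c ∪ {y : ℝ | 0 < y ∧ rearrangement f x < f y},
        ENNReal.ofReal (y ^ lam * f' y ^ 2) := (lintegral_union hO1meas hdisj).symm
    _ ≤ ∫⁻ y in {y : ℝ | 0 < y ∧ rearrangement f (x + h) < f y},
        ENNReal.ofReal (y ^ lam * f' y ^ 2) :=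
        lintegral_mono' (Measure.restrict_mono hsubU le_rfl) le_rfl



lemma key_F (lam : ℝ) (hlam0 : 0 ≤ lam)
    (hc : ContinuousOn f (Ici 0))
    (hAC : ∀ a b : ℝ, 0 ≤ a → a ≤ b →
      IntervalIntegrable f' volume a b ∧ (∫ x in a..b, f' x) = f b - f a)
    (hlevel : ∀ t : ℝ, 0 < t → volume {y : ℝ | 0 ≤ y ∧ t < f y} < ⊤)
    (hE : (∫⁻ x in Set.Ioi (0 : ℝ), ENNReal.ofReal (x ^ lam * f' x ^ 2)) < ⊤)
    {x h : ℝ} (hx : 0 < x) (hh : 0 < h) :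
    ENNReal.ofReal ((rearrangement f x - rearrangement f (x + h))^2 * x ^ lam / h) +
      (∫⁻ y in {y : ℝ | 0 < y ∧ rearrangement f x < f y},
        ENNReal.ofReal (y ^ lam * f' y ^ 2)) ≤
      ∫⁻ y in {y : ℝ | 0 < y ∧ rearrangement f (x + h) < f y},
        ENNReal.ofReal (y ^ lam * f' y ^ 2) := by
  set D := rearrangement f x - rearrangement f (x + h) with hDdef
  have hD0 : 0 ≤ D := by
    have := re_antitone hc hlevel hx (by linarith : x ≤ x + h)
    simp [hDdef]
    linarith
  have hmono0 : (∫⁻ y in {y : ℝ | 0 < y ∧ rearrangement f x < f y},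
        ENNReal.ofReal (y ^ lam * f' y ^ 2)) ≤
      ∫⁻ y in {y : ℝ | 0 < y ∧ rearrangement f (x + h) < f y},
        ENNReal.ofReal (y ^ lam * f' y ^ 2) := by
    have hsub : {y : ℝ | 0 < y ∧ rearrangement f x < f y}
        ⊆ {y : ℝ | 0 < y ∧ rearrangement f (x + h) < f y} := by
      rintro y ⟨hy0, hyt⟩
      exact ⟨hy0, lt_of_le_of_lt (re_antitone hc hlevel hx (by linarith)) hyt⟩
    exact lintegral_mono' (Measure.restrict_mono hsub le_rfl) le_rfl
  rcases eq_or_lt_of_le hD0 with hD | hD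
  · rw [← hD]
    simpa using hmono0
  -- now D > 0, hence rearrangement f x > 0
  have hrx : 0 < rearrangement f x := lt_of_lt_of_le hD (by
    have := re_nonneg f (x + h); linarith)
  set e : ℕ → ℝ := fun n => D / (2 * ((n : ℝ) + 1)) with hedef
  have he_pos : ∀ n, 0 < e n := fun n => by
    have : (0:ℝ) < 2 * ((n:ℝ) + 1) := by positivity
    exact div_pos hD this
  have he_le : ∀ n, 2 * e n ≤ D := by
    intro n
    show 2 * (D / (2 * ((n:ℝ) + 1))) ≤ D
    have hne : ((n:ℝ) + 1) ≠ 0 := by positivity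
    have h1 : 2 * (D / (2 * ((n:ℝ) + 1))) = D / ((n:ℝ) + 1) := by
      field_simp
    rw [h1]
    exact div_le_self hD.le (by linarith [Nat.cast_nonneg (α := ℝ) n])
  have hterm : ∀ n : ℕ,
      ENNReal.ofReal ((D - 2 * e n)^2 * x ^ lam / h) +
        (∫⁻ y in {y : ℝ | 0 < y ∧ rearrangement f x < f y},
          ENNReal.ofReal (y ^ lam * f' y ^ 2)) ≤
      ∫⁻ y in {y : ℝ | 0 < y ∧ rearrangement f (x + h) < f y},
        ENNReal.ofReal (y ^ lam * f' y ^ 2) := by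
    intro n
    set ε := e n with hεdef
    have hε : 0 < ε := he_pos n
    have hε2 : 2 * ε ≤ D := he_le n
    set u := rearrangement f x - ε with hudef
    have hu0 : 0 < u := by
      have h1 := re_nonneg f (x + h)
      simp only [hudef]
      nlinarith
    have hux : u < rearrangement f x := by simp only [hudef]; linarith
    obtain ⟨v, hvS, hvlt⟩ := exists_lt_of_csInf_lt
      (S_nonempty hc hlevel (by linarith : (0:ℝ) < x + h))
      (show sInf {t : ℝ | 0 < t ∧ volume {y : ℝ | 0 ≤ y ∧ t < f y} ≤ ENNReal.ofReal (x + h)}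
        < rearrangement f (x + h) + ε by
          rw [show sInf {t : ℝ | 0 < t ∧ volume {y : ℝ | 0 ≤ y ∧ t < f y}
            ≤ ENNReal.ofReal (x + h)} = rearrangement f (x + h) from rfl]
          linarith)
    have hvge : rearrangement f (x + h) ≤ v := csInf_le (S_bddBelow f (x + h)) hvS
    have hvu : v < u := by
      simp only [hudef]
      have : v < rearrangement f (x + h) + ε := hvlt
      simp only [hDdef] at hε2
      linarith
    have hEineq := key_E lam hlam0 hc hAC hlevel hE hx hh hu0 hux hvS.1 hvu hvS.2 hvge
    refine le_trans (add_le_add ?_ le_rfl) hEineq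
    apply ENNReal.ofReal_le_ofReal
    have h1 : 0 ≤ D - 2 * ε := by linarith
    have h2 : D - 2 * ε ≤ u - v := by simp only [hudef]; linarith
    have hbase : (D - 2 * ε)^2 ≤ (u - v)^2 := by nlinarith
    have h3 := mul_le_mul_of_nonneg_right hbase (Real.rpow_nonneg hx.le lam)
    exact (div_le_div_iff_of_pos_right hh).2 h3
  -- pass to the limit in n
  have hee : e = fun n : ℕ => (D / 2) * (1 / ((n:ℝ) + 1)) := by
    funext n
    show D / (2 * ((n:ℝ) + 1)) = (D / 2) * (1 / ((n:ℝ) + 1))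
    have hne : ((n:ℝ) + 1) ≠ 0 := by positivity
    field_simp
  have he0 : Tendsto e atTop (𝓝 0) := by
    rw [hee]
    have h2 := tendsto_one_div_add_atTop_nhds_zero_nat.const_mul (D / 2)
    simpa using h2
  have hreal : Tendsto (fun n => (D - 2 * e n)^2 * x ^ lam / h) atTop
      (𝓝 (D^2 * x ^ lam / h)) := by
    have h1 : Tendsto (fun n => D - 2 * e n) atTop (𝓝 D) := by
      have h2 := (tendsto_const_nhds (X := ℝ) (f := atTop (α := ℕ)) (x := D)).sub (he0.const_mul 2)
      simpa using h2
    have h3 := ((h1.pow 2).mul_const (x ^ lam)).div_const h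
    simpa using h3
  have htend := (ENNReal.tendsto_ofReal hreal).add
    (tendsto_const_nhds (f := atTop (α := ℕ)) (x := ∫⁻ y in {y : ℝ | 0 < y ∧ rearrangement f x < f y},
      ENNReal.ofReal (y ^ lam * f' y ^ 2)))
  exact le_of_tendsto' htend hterm


lemma ae_diff (hc : ContinuousOn f (Ici 0))
    (hlevel : ∀ t : ℝ, 0 < t → volume {y : ℝ | 0 ≤ y ∧ t < f y} < ⊤) :
    ∀ᵐ x : ℝ, x ∈ Ioi (0:ℝ) → DifferentiableAt ℝ (rearrangement f) x := by
  have hg : ∀ k : ℕ, ∀ᵐ x : ℝ,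
      DifferentiableAt ℝ (fun x => rearrangement f (max x (1/((k:ℝ)+1)))) x := by
    intro k
    set ck : ℝ := 1/((k:ℝ)+1) with hck
    have hck0 : 0 < ck := by positivity
    have hanti : Antitone (fun x => rearrangement f (max x ck)) := by
      intro a b hab
      exact re_antitone hc hlevel (lt_of_lt_of_le hck0 (le_max_right _ _))
        (max_le_max hab le_rfl)
    have hmono : Monotone (fun x => -(rearrangement f (max x ck))) :=
      fun a b hab => neg_le_neg (hanti hab)
    filter_upwards [hmono.ae_differentiableAt] with x hx
    have := hx.neg
    simpa using this
  have hall : ∀ᵐ x : ℝ, ∀ k : ℕ,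
      DifferentiableAt ℝ (fun x => rearrangement f (max x (1/((k:ℝ)+1)))) x :=
    (ae_all_iff).2 hg
  filter_upwards [hall] with x hx hx0
  simp only [mem_Ioi] at hx0
  obtain ⟨k, hk⟩ := exists_nat_one_div_lt hx0
  have heq : rearrangement f =ᶠ[𝓝 x] (fun x => rearrangement f (max x (1/((k:ℝ)+1)))) := by
    filter_upwards [Ioi_mem_nhds hk] with y hy
    simp only [mem_Ioi] at hy
    rw [max_eq_left hy.le]
  exact heq.differentiableAt_iff.2 (hx k)

lemma lintegral_Ioi_eq_iSup (g : ℝ → ENNReal) (hg : Measurable g) :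
    ∫⁻ x in Ioi (0:ℝ), g x = ⨆ M : ℕ, ∫⁻ x in Ioc (0:ℝ) (M:ℝ), g x := by
  rw [← lintegral_indicator measurableSet_Ioi]
  have h1 : ∀ x, (Ioi (0:ℝ)).indicator g x = ⨆ M : ℕ, (Ioc (0:ℝ) (M:ℝ)).indicator g x := by
    intro x
    by_cases hx : x ∈ Ioi (0:ℝ)
    · obtain ⟨M, hM⟩ := exists_nat_ge x
      apply le_antisymm
      · rw [indicator_of_mem hx]
        refine le_trans ?_ (le_iSup (fun M : ℕ => (Ioc (0:ℝ) (M:ℝ)).indicator g x) M)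
        have hmem : x ∈ Ioc (0:ℝ) (M:ℝ) := mem_Ioc.2 ⟨mem_Ioi.1 hx, hM⟩
        rw [indicator_of_mem hmem]
      · refine iSup_le fun K => ?_
        by_cases hxK : x ∈ Ioc (0:ℝ) (K:ℝ)
        · rw [indicator_of_mem hxK, indicator_of_mem hx]
        · rw [indicator_of_notMem hxK]; exact zero_le
    · have hx' : ∀ K : ℕ, x ∉ Ioc (0:ℝ) (K:ℝ) := fun K hK => hx hK.1
      simp [indicator_of_notMem, hx, hx']
  calc ∫⁻ x, (Ioi (0:ℝ)).indicator g x
      = ∫⁻ x, ⨆ M : ℕ, (Ioc (0:ℝ) (M:ℝ)).indicator g x := by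
        congr 1; funext x; exact h1 x
    _ = ⨆ M : ℕ, ∫⁻ x, (Ioc (0:ℝ) (M:ℝ)).indicator g x := by
        refine lintegral_iSup (fun M => hg.indicator measurableSet_Ioc) ?_
        intro M K hMK x
        exact indicator_le_indicator_of_subset
          (Ioc_subset_Ioc_right (Nat.cast_le.2 hMK)) (fun _ => zero_le) x
    _ = ⨆ M : ℕ, ∫⁻ x in Ioc (0:ℝ) (M:ℝ), g x := by
        congr 1; funext M; exact lintegral_indicator measurableSet_Ioc g

end PSaux

/-- **Weighted Pólya–Szegő inequality.** Let `λ ∈ [0,2)` and let `f : [0,∞) → [0,∞)` be a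
nonnegative locally Sobolev function (encoded via its a.e. derivative `f'` through the
fundamental theorem of calculus) with finite weighted Dirichlet energy
`ℰ_λ(f) = ∫₀^∞ x^λ f'(x)² dx < ∞` and finite superlevel sets. Then the nonincreasing
rearrangement `f*` of `f` satisfies `ℰ_λ(f*) ≤ ℰ_λ(f)`. -/
theorem weighted_polya_szego (lam : ℝ) (hlam0 : 0 ≤ lam) (hlam2 : lam < 2)
    (f f' : ℝ → ℝ) (hf : ∀ x : ℝ, 0 ≤ f x)
    (hAC : ∀ a b : ℝ, 0 ≤ a → a ≤ b →
      IntervalIntegrable f' volume a b ∧ (∫ x in a..b, f' x) = f b - f a)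
    (hlevel : ∀ t : ℝ, 0 < t → volume {y : ℝ | 0 ≤ y ∧ t < f y} < ⊤)
    (hE : (∫⁻ x in Set.Ioi (0 : ℝ), ENNReal.ofReal (x ^ lam * f' x ^ 2)) < ⊤) :
    (∫⁻ x in Set.Ioi (0 : ℝ),
        ENNReal.ofReal (x ^ lam * (deriv (rearrangement f) x) ^ 2)) ≤
      ∫⁻ x in Set.Ioi (0 : ℝ), ENNReal.ofReal (x ^ lam * f' x ^ 2) := by
  have hc : ContinuousOn f (Ici 0) := PSaux.contOn hAC
  set Etot := ∫⁻ x in Set.Ioi (0 : ℝ), ENNReal.ofReal (x ^ lam * f' x ^ 2) with hEtotdef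
  have hEtop : Etot < ⊤ := hE
  have hEtot_ne : Etot ≠ ⊤ := hEtop.ne
  set G : ℝ → ENNReal := fun t =>
    ∫⁻ y in {y : ℝ | 0 < y ∧ t < f y}, ENNReal.ofReal (y ^ lam * f' y ^ 2) with hGdef
  have hGanti : Antitone G := by
    intro t t' htt'
    refine lintegral_mono' (Measure.restrict_mono ?_ le_rfl) le_rfl
    rintro y ⟨hy0, hyt⟩
    exact ⟨hy0, lt_of_le_of_lt htt' hyt⟩
  have hGle : ∀ t, G t ≤ Etot := by
    intro t
    rw [hEtotdef]
    refine lintegral_mono' (Measure.restrict_mono ?_ le_rfl) le_rfl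
    rintro y ⟨hy0, _⟩
    exact hy0
  set Phi : ℝ → ENNReal := fun sx => G (rearrangement f (Real.exp sx)) with hPhidef
  have hPhimono : Monotone Phi := by
    intro a b hab
    exact hGanti (PSaux.re_antitone hc hlevel (Real.exp_pos a) (Real.exp_le_exp.2 hab))
  have hPhimeas : Measurable Phi := hPhimono.measurable
  have hPhiG : ∀ {x : ℝ}, 0 < x → Phi (Real.log x) = G (rearrangement f x) := by
    intro x hx
    simp only [hPhidef, Real.exp_log hx]
  have hPhile : ∀ sx, Phi sx ≤ Etot := fun sx => hGle _
  have hPhitop : ∀ sx, Phi sx ≠ ⊤ := fun sx => (lt_of_le_of_lt (hPhile sx) hEtop).ne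
  set ψ : ℕ → ℝ → ENNReal := fun n x =>
    ENNReal.ofReal ((n:ℝ)+1) *
      (Phi (Real.log (x + 1/((n:ℝ)+1))) - Phi (Real.log x)) with hψdef
  have hψmeas : ∀ n, Measurable (ψ n) := by
    intro n
    apply Measurable.const_mul
    exact ((hPhimeas.comp (Real.measurable_log.comp (measurable_id.add_const _))).sub
      (hPhimeas.comp Real.measurable_log))
  -- the pointwise a.e. liminf bound
  have hae : ∀ᵐ x ∂(volume.restrict (Ioi (0:ℝ))),
      ENNReal.ofReal (x ^ lam * (deriv (rearrangement f) x) ^ 2)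
        ≤ liminf (fun n => ψ n x) atTop := by
    rw [ae_restrict_iff' measurableSet_Ioi]
    filter_upwards [PSaux.ae_diff hc hlevel] with x hdiff hx0
    have hx : (0:ℝ) < x := hx0
    have hd : DifferentiableAt ℝ (rearrangement f) x := hdiff hx0
    have hstep : ∀ n : ℕ,
        ENNReal.ofReal (x ^ lam *
          (((n:ℝ)+1) * (rearrangement f x - rearrangement f (x + 1/((n:ℝ)+1))))^2)
          ≤ ψ n x := by
      intro n
      have hδpos : (0:ℝ) < 1/((n:ℝ)+1) := by positivity
      have hkF := PSaux.key_F lam hlam0 hc hAC hlevel hE hx hδpos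
      have h1 : ENNReal.ofReal
          ((rearrangement f x - rearrangement f (x + 1/((n:ℝ)+1)))^2 * x ^ lam / (1/((n:ℝ)+1)))
          ≤ Phi (Real.log (x + 1/((n:ℝ)+1))) - Phi (Real.log x) := by
        rw [hPhiG hx, hPhiG (by positivity : (0:ℝ) < x + 1/((n:ℝ)+1))]
        have hbne : G (rearrangement f x) ≠ ⊤ := (lt_of_le_of_lt (hGle _) hEtop).ne
        have hstep2 := tsub_le_tsub_right hkF (G (rearrangement f x))
        rw [ENNReal.add_sub_cancel_right hbne] at hstep2
        exact hstep2
      have heq2 : x ^ lam *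
          (((n:ℝ)+1) * (rearrangement f x - rearrangement f (x + 1/((n:ℝ)+1))))^2
          = ((n:ℝ)+1) *
            ((rearrangement f x - rearrangement f (x + 1/((n:ℝ)+1)))^2 * x ^ lam / (1/((n:ℝ)+1))) := by
        have hne : ((n:ℝ)+1) ≠ 0 := by positivity
        field_simp
      rw [heq2, ENNReal.ofReal_mul (by positivity : (0:ℝ) ≤ (n:ℝ)+1)]
      exact mul_le_mul_right h1 _
    have hslope : Tendsto (fun n : ℕ =>
        ((n:ℝ)+1) * (rearrangement f x - rearrangement f (x + 1/((n:ℝ)+1)))) atTop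
        (𝓝 (-(deriv (rearrangement f) x))) := by
      have hds : HasDerivAt (rearrangement f) (deriv (rearrangement f) x) x := hd.hasDerivAt
      rw [hasDerivAt_iff_tendsto_slope] at hds
      have hseq : Tendsto (fun n : ℕ => x + 1/((n:ℝ)+1)) atTop (𝓝[≠] x) := by
        refine tendsto_nhdsWithin_of_tendsto_nhds_of_eventually_within _ ?_ ?_
        · have h2 := (tendsto_const_nhds (X := ℝ) (f := atTop (α := ℕ)) (x := x)).add
            tendsto_one_div_add_atTop_nhds_zero_nat
          simpa using h2
        · refine Eventually.of_forall fun n => ?_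
          have hp : (0:ℝ) < 1/((n:ℝ)+1) := by positivity
          simp only [mem_compl_iff, mem_singleton_iff]
          intro hcon
          nlinarith [hcon]
      have hcomp := (hds.comp hseq).neg
      refine hcomp.congr fun n => ?_
      simp only [Function.comp_apply]
      rw [slope_def_field, show x + 1/((n:ℝ)+1) - x = 1/((n:ℝ)+1) by ring]
      have hne : ((n:ℝ)+1) ≠ 0 := by positivity
      field_simp
      ring
    have hLlim : Tendsto (fun n : ℕ => ENNReal.ofReal (x ^ lam *
        (((n:ℝ)+1) * (rearrangement f x - rearrangement f (x + 1/((n:ℝ)+1))))^2)) atTop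
        (𝓝 (ENNReal.ofReal (x ^ lam * (deriv (rearrangement f) x) ^ 2))) := by
      apply ENNReal.tendsto_ofReal
      have h2 := (hslope.pow 2).const_mul (x ^ lam)
      simpa [neg_sq] using h2
    calc ENNReal.ofReal (x ^ lam * (deriv (rearrangement f) x) ^ 2)
        = liminf (fun n : ℕ => ENNReal.ofReal (x ^ lam *
            (((n:ℝ)+1) * (rearrangement f x - rearrangement f (x + 1/((n:ℝ)+1))))^2)) atTop :=
          (hLlim.liminf_eq).symm
      _ ≤ liminf (fun n => ψ n x) atTop := liminf_le_liminf (Eventually.of_forall hstep)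
  have hFatou : (∫⁻ x in Ioi (0:ℝ),
        ENNReal.ofReal (x ^ lam * (deriv (rearrangement f) x) ^ 2))
      ≤ liminf (fun n => ∫⁻ x in Ioi (0:ℝ), ψ n x) atTop :=
    le_trans (lintegral_mono_ae hae) (lintegral_liminf_le hψmeas)
  -- the uniform integral bound for ψ n
  set T := Etot.toReal with hTdef
  have hTnn : 0 ≤ T := ENNReal.toReal_nonneg
  set W : ℝ → ℝ := fun x => (Phi (Real.log x)).toReal with hWdef
  have hWmeas : Measurable W :=
    ENNReal.measurable_toReal.comp (hPhimeas.comp Real.measurable_log)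
  have hWnn : ∀ x, 0 ≤ W x := fun x => ENNReal.toReal_nonneg
  have hWle : ∀ x, W x ≤ T := fun x => ENNReal.toReal_mono hEtot_ne (hPhile _)
  have hWint : ∀ (S : Set ℝ), volume S < ⊤ → ∀ (d : ℝ),
      Integrable (fun x => W (x + d)) (volume.restrict S) := by
    intro S hvS d
    refine Integrable.mono' (integrableOn_const (C := T) hvS.ne) ?_ ?_
    · exact ((hWmeas.comp (measurable_id.add_const d)).aestronglyMeasurable)
    · exact ae_of_all _ (fun x => by rw [Real.norm_of_nonneg (hWnn _)]; exact hWle _)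
  have hWII : ∀ a b : ℝ, IntervalIntegrable W volume a b := by
    intro a b
    rw [intervalIntegrable_iff]
    have h2 := hWint (Set.uIoc a b) (by rw [uIoc]; exact measure_Ioc_lt_top) 0
    simpa [IntegrableOn] using h2
  have hψle : ∀ n, (∫⁻ x in Ioi (0:ℝ), ψ n x) ≤ Etot := by
    intro n
    have hδpos : (0:ℝ) < 1/((n:ℝ)+1) := by positivity
    rw [PSaux.lintegral_Ioi_eq_iSup _ (hψmeas n)]
    refine iSup_le fun M => ?_
    have hM0 : (0:ℝ) ≤ (M:ℝ) := Nat.cast_nonneg M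
    have hcongr : ∫⁻ x in Ioc (0:ℝ) (M:ℝ), ψ n x
        = ∫⁻ x in Ioc (0:ℝ) (M:ℝ),
            ENNReal.ofReal (((n:ℝ)+1) * (W (x + 1/((n:ℝ)+1)) - W x)) := by
      refine lintegral_congr_ae ((ae_restrict_iff' measurableSet_Ioc).2
        (ae_of_all _ fun x hx => ?_))
      have hx0 : (0:ℝ) < x := hx.1
      have hmle : Phi (Real.log x) ≤ Phi (Real.log (x + 1/((n:ℝ)+1))) :=
        hPhimono (Real.log_le_log hx0 (by linarith))
      have hsub_eq : Phi (Real.log (x + 1/((n:ℝ)+1))) - Phi (Real.log x)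
          = ENNReal.ofReal (W (x + 1/((n:ℝ)+1)) - W x) := by
        rw [hWdef]
        simp only
        rw [← ENNReal.toReal_sub_of_le hmle (hPhitop _)]
        rw [ENNReal.ofReal_toReal (ENNReal.sub_ne_top (hPhitop _))]
      show ENNReal.ofReal ((n:ℝ)+1) *
          (Phi (Real.log (x + 1/((n:ℝ)+1))) - Phi (Real.log x)) = _
      rw [hsub_eq, ← ENNReal.ofReal_mul (by positivity : (0:ℝ) ≤ (n:ℝ)+1)]
    rw [hcongr]
    have hint1 : Integrable W (volume.restrict (Ioc (0:ℝ) (M:ℝ))) := by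
      have h2 := hWint (Ioc (0:ℝ) (M:ℝ)) measure_Ioc_lt_top 0
      simpa using h2
    have hint2 : Integrable (fun x => W (x + 1/((n:ℝ)+1)))
        (volume.restrict (Ioc (0:ℝ) (M:ℝ))) :=
      hWint _ measure_Ioc_lt_top _
    have hgint : Integrable (fun x => ((n:ℝ)+1) * (W (x + 1/((n:ℝ)+1)) - W x))
        (volume.restrict (Ioc (0:ℝ) (M:ℝ))) := (hint2.sub hint1).const_mul _
    have hgnn : 0 ≤ᵐ[volume.restrict (Ioc (0:ℝ) (M:ℝ))]
        fun x => ((n:ℝ)+1) * (W (x + 1/((n:ℝ)+1)) - W x) := by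
      refine (ae_restrict_iff' measurableSet_Ioc).2 (ae_of_all _ fun x hx => ?_)
      have hWx : W x ≤ W (x + 1/((n:ℝ)+1)) := by
        rw [hWdef]
        simp only
        exact ENNReal.toReal_mono (hPhitop _)
          (hPhimono (Real.log_le_log hx.1 (by linarith)))
      simp only [Pi.zero_apply]
      have h3 : (0:ℝ) ≤ (n:ℝ)+1 := by positivity
      nlinarith
    rw [← ofReal_integral_eq_lintegral_ofReal hgint hgnn]
    have hreal : (∫ x in Ioc (0:ℝ) (M:ℝ), ((n:ℝ)+1) * (W (x + 1/((n:ℝ)+1)) - W x)) ≤ T := by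
      rw [integral_const_mul, integral_sub hint2 hint1]
      have e0 : ∫ x in Ioc (0:ℝ) (M:ℝ), W x = ∫ x in (0:ℝ)..(M:ℝ), W x :=
        (intervalIntegral.integral_of_le hM0).symm
      have e1 : ∫ x in Ioc (0:ℝ) (M:ℝ), W (x + 1/((n:ℝ)+1))
          = ∫ x in (0:ℝ)..(M:ℝ), W (x + 1/((n:ℝ)+1)) :=
        (intervalIntegral.integral_of_le hM0).symm
      have e2 : ∫ x in (0:ℝ)..(M:ℝ), W (x + 1/((n:ℝ)+1))
          = ∫ x in (1/((n:ℝ)+1))..((M:ℝ)+1/((n:ℝ)+1)), W x := by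
        have h2 := intervalIntegral.integral_comp_add_right (a := (0:ℝ)) (b := (M:ℝ))
          W (1/((n:ℝ)+1))
        simpa using h2
      have hadj1 : (∫ x in (0:ℝ)..(M:ℝ), W x)
          + ∫ x in (M:ℝ)..((M:ℝ)+1/((n:ℝ)+1)), W x
          = ∫ x in (0:ℝ)..((M:ℝ)+1/((n:ℝ)+1)), W x :=
        intervalIntegral.integral_add_adjacent_intervals (hWII _ _) (hWII _ _)
      have hadj2 : (∫ x in (0:ℝ)..(1/((n:ℝ)+1)), W x)
          + ∫ x in (1/((n:ℝ)+1))..((M:ℝ)+1/((n:ℝ)+1)), W x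
          = ∫ x in (0:ℝ)..((M:ℝ)+1/((n:ℝ)+1)), W x :=
        intervalIntegral.integral_add_adjacent_intervals (hWII _ _) (hWII _ _)
      have hb1 : (∫ x in (M:ℝ)..((M:ℝ)+1/((n:ℝ)+1)), W x) ≤ (1/((n:ℝ)+1)) * T := by
        have h2 := intervalIntegral.integral_mono_on
          (by linarith : (M:ℝ) ≤ (M:ℝ)+1/((n:ℝ)+1)) (hWII _ _)
          (intervalIntegrable_const (c := T)) (fun y _ => hWle y)
        rw [intervalIntegral.integral_const] at h2
        have h3 : ((M:ℝ)+1/((n:ℝ)+1) - (M:ℝ)) • T = (1/((n:ℝ)+1)) * T := by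
          rw [smul_eq_mul]; ring_nf
        rw [h3] at h2
        exact h2
      have hb2 : 0 ≤ ∫ x in (0:ℝ)..(1/((n:ℝ)+1)), W x :=
        intervalIntegral.integral_nonneg hδpos.le (fun y _ => hWnn y)
      have hδT : ((n:ℝ)+1) * ((1/((n:ℝ)+1))*T) = T := by
        have hne : ((n:ℝ)+1) ≠ 0 := by positivity
        field_simp
      calc ((n:ℝ)+1) * ((∫ x in Ioc (0:ℝ) (M:ℝ), W (x + 1/((n:ℝ)+1)))
            - ∫ x in Ioc (0:ℝ) (M:ℝ), W x)
          = ((n:ℝ)+1) * ((∫ x in (M:ℝ)..((M:ℝ)+1/((n:ℝ)+1)), W x)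
            - ∫ x in (0:ℝ)..(1/((n:ℝ)+1)), W x) := by
            rw [e0, e1, e2]
            congr 1
            linarith [hadj1, hadj2]
        _ ≤ ((n:ℝ)+1) * ((1/((n:ℝ)+1))*T - 0) := by
            refine mul_le_mul_of_nonneg_left ?_ (by positivity)
            linarith
        _ = T := by rw [sub_zero]; exact hδT
    calc ENNReal.ofReal (∫ x in Ioc (0:ℝ) (M:ℝ), ((n:ℝ)+1) * (W (x + 1/((n:ℝ)+1)) - W x))
        ≤ ENNReal.ofReal T := ENNReal.ofReal_le_ofReal hreal
      _ = Etot := ENNReal.ofReal_toReal hEtot_ne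
  have h1 : limsup (fun n => ∫⁻ x in Ioi (0:ℝ), ψ n x) atTop ≤ Etot :=
    limsup_le_of_le (by isBoundedDefault) (Eventually.of_forall hψle)
  have h2 : liminf (fun n => ∫⁻ x in Ioi (0:ℝ), ψ n x) atTop
      ≤ limsup (fun n => ∫⁻ x in Ioi (0:ℝ), ψ n x) atTop :=
    liminf_le_limsup (by isBoundedDefault) (by isBoundedDefault)
  exact le_trans hFatou (le_trans h2 h1)

end
end

section
/- For λ ∈ [0,2) and μ ∈ ℝ define, for integer k ≥ 1, L_λ(k^μ) = k^λ((k+1)^μ − k^μ) − (k−1)^λ(k^μ − (k−1)^μ). Then: (1) for all μ ≥ 0 and λ ∈ [0,2), L_λ(k^μ) / k^{μ+λ−2} → μ(μ+λ−1) as k → ∞; (2) for all μ > 0 and λ ∈ [1,2) there exists a constant C = C(μ,λ) ≥ 1 such that C⁻¹ k^{μ+λ−2} ≤ L_λ(k^μ) ≤ C k^{μ+λ−2} for all k ∈ ℕ, k ≥ 1. -/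
open Filter Real Set

/-- `a_λ(k) = k^λ` for `k ≥ 1`, `a_λ(0) = 0` (also for `λ = 0`). -/
noncomputable def aF (lam : ℝ) (k : ℕ) : ℝ := if k = 0 then 0 else (k : ℝ) ^ lam

/-- `L_λ(k^μ) = k^λ ((k+1)^μ − k^μ) − (k−1)^λ (k^μ − (k−1)^μ)`, with the convention that the
weight `(k−1)^λ` is `0` for `k = 1` (this is `aF lam (k-1)` with truncated subtraction). -/
noncomputable def Lpow (lam mu : ℝ) (k : ℕ) : ℝ :=
  aF lam k * (((k : ℝ) + 1) ^ mu - (k : ℝ) ^ mu) -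
    aF lam (k - 1) * ((k : ℝ) ^ mu - ((k - 1 : ℕ) : ℝ) ^ mu)

noncomputable def phiF (lam mu t : ℝ) : ℝ :=
  (1+t)^mu + (1-t)^(lam+mu) - (1-t)^lam - 1

noncomputable def phiD (lam mu t : ℝ) : ℝ :=
  mu*(1+t)^(mu-1) - (lam+mu)*(1-t)^(lam+mu-1) + lam*(1-t)^(lam-1)

lemma hasDerivAt_phiF (lam mu t : ℝ) (ht2 : -1 < t) (ht1 : t < 1) :
    HasDerivAt (phiF lam mu) (phiD lam mu t) t := by
  have h1 : (1:ℝ) + t ≠ 0 := by intro h; linarith [h]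
  have h2 : (1:ℝ) - t ≠ 0 := by intro h; linarith [h]
  have d1 : HasDerivAt (fun s : ℝ => 1 + s) 1 t := by
    simpa using (hasDerivAt_id t).const_add (1:ℝ)
  have d2 : HasDerivAt (fun s : ℝ => 1 - s) (-1) t := by
    simpa using (hasDerivAt_id t).const_sub (1:ℝ)
  have e1 := d1.rpow_const (p := mu) (Or.inl h1)
  have e2 := d2.rpow_const (p := lam+mu) (Or.inl h2)
  have e3 := d2.rpow_const (p := lam) (Or.inl h2)
  have := ((e1.add e2).sub e3).sub_const (1:ℝ)
  refine this.congr_deriv ?_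
  unfold phiD; ring

lemma hasDerivAt_phiD (lam mu : ℝ) :
    HasDerivAt (phiD lam mu) (2*mu*(mu+lam-1)) 0 := by
  have h1 : ((fun s : ℝ => 1 + s) 0) ≠ 0 := by norm_num
  have h2 : ((fun s : ℝ => 1 - s) 0) ≠ 0 := by norm_num
  have d1 : HasDerivAt (fun s : ℝ => 1 + s) 1 0 := by
    simpa using (hasDerivAt_id (0:ℝ)).const_add (1:ℝ)
  have d2 : HasDerivAt (fun s : ℝ => 1 - s) (-1) 0 := by
    simpa using (hasDerivAt_id (0:ℝ)).const_sub (1:ℝ)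
  have e1 := (d1.rpow_const (p := mu-1) (Or.inl h1)).const_mul mu
  have e2 := (d2.rpow_const (p := lam+mu-1) (Or.inl h2)).const_mul (lam+mu)
  have e3 := (d2.rpow_const (p := lam-1) (Or.inl h2)).const_mul lam
  have := (e1.sub e2).add e3
  refine this.congr_deriv ?_
  simp only [add_zero, sub_zero, Real.one_rpow]
  ring

lemma phiD_zero (lam mu : ℝ) : phiD lam mu 0 = 0 := by
  unfold phiD
  simp only [add_zero, sub_zero, Real.one_rpow]
  ring

lemma tendsto_phi_div_sq (lam mu : ℝ) :
    Tendsto (fun t => phiF lam mu t / t^2) (nhdsWithin (0:ℝ) (Ioi 0))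
      (nhds (mu*(mu+lam-1))) := by
  have hmem : Ioo (0:ℝ) 1 ∈ nhdsWithin (0:ℝ) (Ioi 0) :=
    Ioo_mem_nhdsGT_of_mem (by constructor <;> norm_num)
  apply HasDerivAt.lhopital_zero_nhdsGT (f' := phiD lam mu) (g' := fun t => 2*t)
  · filter_upwards [hmem] with t ht
    exact hasDerivAt_phiF lam mu t (by linarith [ht.1]) ht.2
  · filter_upwards with t
    have := hasDerivAt_pow 2 t
    simpa [pow_one] using this.congr_deriv (by push_cast; ring)
  · filter_upwards [hmem] with t ht
    have : (0:ℝ) < t := ht.1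
    positivity
  · have hc : ContinuousAt (phiF lam mu) 0 :=
      (hasDerivAt_phiF lam mu 0 (by norm_num) (by norm_num)).continuousAt
    have h0 : phiF lam mu 0 = 0 := by
      unfold phiF; simp [Real.one_rpow]
    have : Tendsto (phiF lam mu) (nhdsWithin (0:ℝ) (Ioi 0)) (nhds (phiF lam mu 0)) :=
      hc.tendsto.mono_left nhdsWithin_le_nhds
    rwa [h0] at this
  · have : Tendsto (fun t : ℝ => t^2) (nhds 0) (nhds 0) := by
      simpa using (continuous_pow 2).tendsto (0:ℝ)
    exact this.mono_left nhdsWithin_le_nhds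
  · have hs := hasDerivAt_iff_tendsto_slope.mp (hasDerivAt_phiD lam mu)
    have h2 : Tendsto (fun t => phiD lam mu t / t) (nhdsWithin (0:ℝ) {(0:ℝ)}ᶜ)
        (nhds (2*mu*(mu+lam-1))) := by
      apply hs.congr
      intro t
      rw [slope_def_field, phiD_zero]
      simp [div_eq_mul_inv]
    have h2' : Tendsto (fun t => phiD lam mu t / t) (nhdsWithin (0:ℝ) (Ioi 0))
        (nhds (2*mu*(mu+lam-1))) :=
      h2.mono_left (nhdsWithin_mono 0 (fun x hx => by
        simp only [mem_compl_iff, mem_singleton_iff]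
        exact ne_of_gt hx))
    have h3 := h2'.div_const 2
    have heq : ∀ t : ℝ, phiD lam mu t / t / 2 = phiD lam mu t / (2*t) := by
      intro t; rw [div_div]; ring_nf
    have : (2*mu*(mu+lam-1))/2 = mu*(mu+lam-1) := by ring
    rw [this] at h3
    exact h3.congr heq

lemma Lpow_eq (lam mu : ℝ) (k : ℕ) (hk : 2 ≤ k) :
    Lpow lam mu k / (k:ℝ)^(mu+lam-2) = phiF lam mu (1/(k:ℝ)) / (1/(k:ℝ))^2 := by
  have hx2 : (2:ℝ) ≤ (k:ℝ) := by exact_mod_cast hk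
  have hx0 : (0:ℝ) < (k:ℝ) := by linarith
  have hx1 : (1:ℝ) < (k:ℝ) := by linarith
  set x : ℝ := (k:ℝ) with hxdef
  set t : ℝ := 1/x with htdef
  have ht0 : 0 < t := by positivity
  have h1t : 0 < 1 - t := by
    rw [htdef, sub_pos]
    exact (div_lt_one hx0).mpr hx1
  have h1pt : 0 < 1 + t := by linarith
  have hkne : k ≠ 0 := by omega
  have hk1ne : k - 1 ≠ 0 := by omega
  have hc : ((k - 1 : ℕ) : ℝ) = x - 1 := by
    have : (1:ℕ) ≤ k := by omega
    push_cast [Nat.cast_sub this]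
    ring
  have haF1 : aF lam k = x ^ lam := by simp [aF, hkne, hxdef]
  have haF2 : aF lam (k-1) = (x - 1) ^ lam := by
    simp [aF, hk1ne, hc]
  have hxne : x ≠ 0 := hx0.ne'
  have hxp : x * (1 + t) = x + 1 := by rw [htdef]; field_simp
  have hxm : x * (1 - t) = x - 1 := by rw [htdef]; field_simp
  have A : (x+1)^mu = x^mu * (1+t)^mu := by
    rw [← hxp, Real.mul_rpow hx0.le h1pt.le]
  have B : (x-1)^lam = x^lam * (1-t)^lam := by
    rw [← hxm, Real.mul_rpow hx0.le h1t.le]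
  have Cc : (x-1)^mu = x^mu * (1-t)^mu := by
    rw [← hxm, Real.mul_rpow hx0.le h1t.le]
  have D : (1-t)^(lam+mu) = (1-t)^lam * (1-t)^mu := Real.rpow_add h1t _ _
  have E : x^(lam+mu) = x^lam * x^mu := Real.rpow_add hx0 _ _
  have hL : Lpow lam mu k = x^(lam+mu) * phiF lam mu t := by
    rw [Lpow, haF1, haF2, hc, A, B, Cc]
    unfold phiF
    rw [D, E]
    ring
  have hxe : x^(lam+mu) = x^(mu+lam-2) * x^2 := by
    rw [← Real.rpow_natCast x 2, ← Real.rpow_add hx0]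
    norm_num
    ring_nf
  have hne : x^(mu+lam-2) ≠ 0 := (Real.rpow_pos_of_pos hx0 _).ne'
  rw [hL, hxe, htdef]
  field_simp

noncomputable def gF (lam mu : ℝ) (x : ℝ) : ℝ := x^lam * (x+1)^mu - x^(lam+mu)

lemma hasDerivAt_gF (lam mu x : ℝ) (hx : 0 < x) :
    HasDerivAt (gF lam mu)
      (lam*x^(lam-1)*(x+1)^mu + x^lam*(mu*(x+1)^(mu-1)) - (lam+mu)*x^(lam+mu-1)) x := by
  have hx1 : (0:ℝ) < x + 1 := by linarith
  have d0 : HasDerivAt (fun y : ℝ => y) 1 x := hasDerivAt_id x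
  have d1 := d0.rpow_const (p := lam) (Or.inl hx.ne')
  have d2' : HasDerivAt (fun y : ℝ => y + 1) 1 x := d0.add_const 1
  have d2 := d2'.rpow_const (p := mu) (Or.inl hx1.ne')
  have d3 := d0.rpow_const (p := lam+mu) (Or.inl hx.ne')
  have := (d1.mul d2).sub d3
  refine this.congr_deriv ?_
  ring

lemma gD_pos (lam mu x : ℝ) (hlam : 1 ≤ lam) (hmu : 0 < mu) (hx : 0 < x) :
    0 < lam*x^(lam-1)*(x+1)^mu + x^lam*(mu*(x+1)^(mu-1)) - (lam+mu)*x^(lam+mu-1) := by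
  have hx1 : (0:ℝ) < x + 1 := by linarith
  have hA : (0:ℝ) < (x+1)^(mu-1) := Real.rpow_pos_of_pos hx1 _
  have key : (lam+mu) * x^mu < ((lam+mu)*x + lam) * ((x+1)^(mu-1)) := by
    rcases le_or_gt 1 mu with hmu1 | hmu1
    · have hle : x^(mu-1) ≤ (x+1)^(mu-1) :=
        Real.rpow_le_rpow hx.le (by linarith) (by linarith)
      have h1 : x^mu ≤ x * (x+1)^(mu-1) := by
        have hxm : x^mu = x * x^(mu-1) := by
          conv_lhs => rw [show mu = 1 + (mu-1) by ring]
          rw [Real.rpow_add hx, Real.rpow_one]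
        rw [hxm]
        exact mul_le_mul_of_nonneg_left hle hx.le
      calc (lam+mu)*x^mu ≤ (lam+mu)*(x*(x+1)^(mu-1)) :=
            mul_le_mul_of_nonneg_left h1 (by linarith)
        _ = ((lam+mu)*x)*((x+1)^(mu-1)) := by ring
        _ < ((lam+mu)*x + lam)*((x+1)^(mu-1)) := by
            apply mul_lt_mul_of_pos_right _ hA; linarith
    · have ham : x^mu * (x+1)^(1-mu) ≤ mu*x + (1-mu)*(x+1) :=
        Real.geom_mean_le_arith_mean2_weighted (le_of_lt hmu) (by linarith)
          hx.le hx1.le (by ring)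
      have hprod : (x+1)^(1-mu) * (x+1)^(mu-1) = 1 := by
        rw [← Real.rpow_add hx1]; norm_num
      have h1 : x^mu ≤ (x+1-mu) * (x+1)^(mu-1) := by
        calc x^mu = x^mu * ((x+1)^(1-mu) * (x+1)^(mu-1)) := by rw [hprod, mul_one]
          _ = (x^mu * (x+1)^(1-mu)) * (x+1)^(mu-1) := by ring
          _ ≤ (mu*x + (1-mu)*(x+1)) * (x+1)^(mu-1) := mul_le_mul_of_nonneg_right ham hA.le
          _ = (x+1-mu)*(x+1)^(mu-1) := by ring_nf
      calc (lam+mu)*x^mu ≤ (lam+mu)*((x+1-mu)*(x+1)^(mu-1)) :=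
            mul_le_mul_of_nonneg_left h1 (by linarith)
        _ = ((lam+mu)*(x+1-mu))*((x+1)^(mu-1)) := by ring
        _ < ((lam+mu)*x + lam)*((x+1)^(mu-1)) := by
            apply mul_lt_mul_of_pos_right _ hA
            nlinarith
  have hxl : (0:ℝ) < x^(lam-1) := Real.rpow_pos_of_pos hx _
  have hmul := mul_lt_mul_of_pos_left key hxl
  have i1 : x^(lam-1) * x^mu = x^(lam+mu-1) := by
    rw [← Real.rpow_add hx]; ring_nf
  have i2 : x^(lam-1) * x = x^lam := by
    have h : x^(lam-1) * x^(1:ℝ) = x^lam := by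
      rw [← Real.rpow_add hx]; ring_nf
    simpa [Real.rpow_one] using h
  have i3 : (x+1)^mu = (x+1)*(x+1)^(mu-1) := by
    conv_lhs => rw [show mu = 1 + (mu-1) by ring]
    rw [Real.rpow_add hx1, Real.rpow_one]
  have e1 : x^(lam-1)*((lam+mu)*x^mu) = (lam+mu)*x^(lam+mu-1) := by
    rw [← i1]; ring
  have e2 : x^(lam-1)*(((lam+mu)*x + lam)*((x+1)^(mu-1)))
      = lam*x^(lam-1)*(x+1)^mu + x^lam*(mu*(x+1)^(mu-1)) := by
    rw [i3, ← i2]; ring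
  rw [e1, e2] at hmul
  linarith

lemma gF_smono (lam mu : ℝ) (hlam : 1 ≤ lam) (hmu : 0 < mu) :
    StrictMonoOn (gF lam mu) (Ici (1:ℝ)) := by
  apply strictMonoOn_of_deriv_pos (convex_Ici 1)
  · intro x hx
    have hx0 : (0:ℝ) < x := lt_of_lt_of_le one_pos hx
    exact (hasDerivAt_gF lam mu x hx0).continuousAt.continuousWithinAt
  · intro x hx
    rw [interior_Ici] at hx
    have hx0 : (0:ℝ) < x := lt_trans one_pos hx
    rw [(hasDerivAt_gF lam mu x hx0).deriv]
    exact gD_pos lam mu x hlam hmu hx0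

lemma L_tendsto (lam mu : ℝ) :
    Tendsto (fun k : ℕ => Lpow lam mu k / (k:ℝ)^(mu+lam-2)) atTop
      (nhds (mu*(mu+lam-1))) := by
  have h1 : Tendsto (fun k : ℕ => 1/(k:ℝ)) atTop (nhdsWithin (0:ℝ) (Ioi 0)) := by
    apply tendsto_nhdsWithin_of_tendsto_nhds_of_eventually_within _
      tendsto_one_div_atTop_nhds_zero_nat
    filter_upwards [eventually_ge_atTop 1] with k hk
    have hk0 : (0:ℝ) < (k:ℝ) := by exact_mod_cast Nat.lt_of_lt_of_le Nat.zero_lt_one hk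
    exact mem_Ioi.mpr (by positivity)
  have h2 := (tendsto_phi_div_sq lam mu).comp h1
  apply h2.congr'
  filter_upwards [eventually_ge_atTop 2] with k hk
  exact (Lpow_eq lam mu k hk).symm

lemma L_pos (lam mu : ℝ) (hlam : 1 ≤ lam) (hmu : 0 < mu) (k : ℕ) (hk : 1 ≤ k) :
    0 < Lpow lam mu k := by
  rcases eq_or_lt_of_le hk with h1 | h2
  · -- k = 1
    have hk1 : k = 1 := h1.symm
    subst hk1
    simp only [Lpow, aF]
    norm_num
    have h2mu : (1:ℝ) < 2 ^ mu := by
      have := Real.one_lt_rpow_iff_of_pos (x := 2) (y := mu) (by norm_num)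
      exact this.mpr (Or.inl ⟨by norm_num, hmu⟩)
    linarith
  · -- k ≥ 2
    have hk2 : 2 ≤ k := h2
    have hx2 : (2:ℝ) ≤ (k:ℝ) := by exact_mod_cast hk2
    have hx0 : (0:ℝ) < (k:ℝ) := by linarith
    have hx1 : (0:ℝ) < (k:ℝ) - 1 := by linarith
    have hkne : k ≠ 0 := by omega
    have hk1ne : k - 1 ≠ 0 := by omega
    have hc : ((k - 1 : ℕ) : ℝ) = (k:ℝ) - 1 := by
      have h1k : (1:ℕ) ≤ k := by omega
      push_cast [Nat.cast_sub h1k]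
      ring
    have hLg : Lpow lam mu k = gF lam mu (k:ℝ) - gF lam mu ((k:ℝ) - 1) := by
      unfold Lpow aF gF
      rw [if_neg hkne, if_neg hk1ne, hc]
      have eA : ((k:ℝ))^lam * ((k:ℝ))^mu = ((k:ℝ))^(lam+mu) := (Real.rpow_add hx0 _ _).symm
      have eB : ((k:ℝ)-1)^lam * ((k:ℝ)-1)^mu = ((k:ℝ)-1)^(lam+mu) :=
        (Real.rpow_add hx1 _ _).symm
      have eC : ((k:ℝ)-1) + 1 = (k:ℝ) := by ring
      rw [eC]
      linear_combination eB - eA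
    rw [hLg, sub_pos]
    apply gF_smono lam mu hlam hmu
    · exact mem_Ici.mpr (by linarith)
    · exact mem_Ici.mpr (by linarith)
    · linarith

/-- **Asymptotics and two–sided bounds for the weighted second difference of powers.**
(1) For all `μ ≥ 0` and `λ ∈ [0,2)`, `L_λ(k^μ)/k^{μ+λ−2} → μ(μ+λ−1)` as `k → ∞`.
(2) For all `μ > 0` and `λ ∈ [1,2)` there is `C = C(μ,λ) ≥ 1` with
`C⁻¹ k^{μ+λ−2} ≤ L_λ(k^μ) ≤ C k^{μ+λ−2}` for all `k ≥ 1`. -/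
theorem L_asymptotics (lam : ℝ) (hlam0 : 0 ≤ lam) (hlam2 : lam < 2) :
    (∀ mu : ℝ, 0 ≤ mu →
      Filter.Tendsto (fun k : ℕ => Lpow lam mu k / (k : ℝ) ^ (mu + lam - 2))
        Filter.atTop (nhds (mu * (mu + lam - 1)))) ∧
    (∀ mu : ℝ, 0 < mu → 1 ≤ lam →
      ∃ C : ℝ, 1 ≤ C ∧ ∀ k : ℕ, 1 ≤ k →
        C⁻¹ * (k : ℝ) ^ (mu + lam - 2) ≤ Lpow lam mu k ∧
          Lpow lam mu k ≤ C * (k : ℝ) ^ (mu + lam - 2)) := by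
  constructor
  · intro mu _
    exact L_tendsto lam mu
  · intro mu hmu hlam1
    set l := mu * (mu + lam - 1) with hldef
    have hl : 0 < l := by rw [hldef]; nlinarith
    set R : ℕ → ℝ := fun k => Lpow lam mu k / (k:ℝ)^(mu+lam-2) with hRdef
    have hev : ∀ᶠ k : ℕ in atTop, R k ∈ Icc (l/2) (2*l) :=
      (L_tendsto lam mu).eventually (Icc_mem_nhds (by linarith) (by linarith))
    obtain ⟨N, hN⟩ := eventually_atTop.mp hev
    set M := max N 1 with hMdef
    have hFne : (Finset.Icc 1 M).Nonempty :=
      ⟨1, Finset.mem_Icc.mpr ⟨le_refl 1, le_max_right N 1⟩⟩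
    set h : ℕ → ℝ := fun k => max (R k) (R k)⁻¹ with hhdef
    set C := max 1 (max (max (2*l) (2*l⁻¹)) ((Finset.Icc 1 M).sup' hFne h)) with hCdef
    refine ⟨C, le_max_left _ _, ?_⟩
    intro k hk
    have hkpos : (0:ℝ) < (k:ℝ) := by exact_mod_cast Nat.lt_of_lt_of_le Nat.zero_lt_one hk
    have hkE : (0:ℝ) < (k:ℝ)^(mu+lam-2) := Real.rpow_pos_of_pos hkpos _
    have hR : 0 < R k := div_pos (L_pos lam mu hlam1 hmu k hk) hkE
    have hC0 : 0 < C := lt_of_lt_of_le one_pos (le_max_left _ _)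
    have hhC : h k ≤ C := by
      rcases le_or_gt N k with hNk | hNk
      · have hmem := hN k hNk
        have hu : R k ≤ 2*l := hmem.2
        have hlo : l/2 ≤ R k := hmem.1
        have hiu : (R k)⁻¹ ≤ 2*l⁻¹ := by
          have h1 : (R k)⁻¹ ≤ (l/2)⁻¹ := by
            apply inv_anti₀ (by linarith) hlo
          have h2 : (l/2)⁻¹ = 2*l⁻¹ := by
            field_simp
          linarith [h1, h2.le]
        have : h k ≤ max (2*l) (2*l⁻¹) := max_le (hu.trans (le_max_left _ _))
          (hiu.trans (le_max_right _ _))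
        exact this.trans ((le_max_left _ _).trans (le_max_right _ _))
      · have hkM : k ≤ M := le_trans (Nat.le_of_lt hNk) (le_max_left N 1)
        have hmem : k ∈ Finset.Icc 1 M := Finset.mem_Icc.mpr ⟨hk, hkM⟩
        exact le_trans (Finset.le_sup' h hmem)
          ((le_max_right _ _).trans (le_max_right _ _))
    have hRC : R k ≤ C := le_trans (le_max_left _ _) hhC
    have hRC' : (R k)⁻¹ ≤ C := le_trans (le_max_right _ _) hhC
    have hone : 1 ≤ C * R k := by
      have hm := mul_le_mul_of_nonneg_right hRC' hR.le
      rwa [inv_mul_cancel₀ hR.ne'] at hm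
    have hCinv : C⁻¹ ≤ R k := by
      have hm := mul_le_mul_of_nonneg_left hone (inv_nonneg.mpr hC0.le)
      rwa [mul_one, ← mul_assoc, inv_mul_cancel₀ hC0.ne', one_mul] at hm
    have hRmul : R k * (k:ℝ)^(mu+lam-2) = Lpow lam mu k := by
      rw [hRdef]
      exact div_mul_cancel₀ _ hkE.ne'
    constructor
    · calc C⁻¹ * (k:ℝ)^(mu+lam-2) ≤ R k * (k:ℝ)^(mu+lam-2) :=
          mul_le_mul_of_nonneg_right hCinv hkE.le
        _ = Lpow lam mu k := hRmul
    · calc Lpow lam mu k = R k * (k:ℝ)^(mu+lam-2) := hRmul.symm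
        _ ≤ C * (k:ℝ)^(mu+lam-2) := mul_le_mul_of_nonneg_right hRC hkE.le
end
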